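/- arXiv:2102.06440 — 5 statements merged into one kernel-verified Lean document; each statement's English description precedes it below -/
import Mathlib

section
/- Under common preferences, a homogeneous arrangement (l,k) with l = k ≤ min{|D|,|H|} is adequate: the (l,l)-matching matches d_t with h_t for every t = 1,…,min{|D|,|H|}, which is the unique stable matching. -/
/- Formal model of the two-step interview-then-match process of
Echenique-et-al-style markets: Step 1 computes the interview matching by
hospital-proposing deferred acceptance (with responsive, capacity-constrained
choice functions); Step 2 computes the final one-to-one matching by
doctor-proposing deferred acceptance on preferences restricted to interview
partners. -/

open Finset

section Model

variable {D H : Type*} [Fintype D] [Fintype H] [DecidableEq D] [DecidableEq H]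

/-- The (at most) `n` best elements of `s` according to `rank` (lower rank = better). -/
def topN {α : Type*} [DecidableEq α] (rank : α → ℕ) (n : ℕ) (s : Finset α) : Finset α :=
  s.filter fun x => (s.filter fun y => rank y < rank x).card < n

/-- A market: strict preferences represented by rank functions
(lower rank = more preferred) together with acceptability predicates. -/
structure Market (D H : Type*) where
  rankDH : D → H → ℕ
  accD : D → H → Bool
  rankHD : H → D → ℕ
  accH : H → D → Bool

/-- Strict preferences: rank functions are injective. -/
def Market.Strict (M : Market D H) : Prop :=
  (∀ d, Function.Injective (M.rankDH d)) ∧ (∀ h, Function.Injective (M.rankHD h))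

/-- Hospital `h` proposes to its `ι h` best acceptable doctors that have not rejected it. -/
def hProps (M : Market D H) (ι : H → ℕ) (R : Finset (H × D)) (h : H) : Finset D :=
  topN (M.rankHD h) (ι h) (univ.filter fun d => M.accH h d ∧ (h, d) ∉ R)

/-- Doctor `d` keeps her `κ d` best acceptable proposals. -/
def dKeeps (M : Market D H) (ι : H → ℕ) (κ : D → ℕ) (R : Finset (H × D)) (d : D) :
    Finset H :=
  topN (fun h => M.rankDH d h) (κ d) (univ.filter fun h => M.accD d h ∧ d ∈ hProps M ι R h)

/-- One round of hospital-proposing deferred acceptance: the (cumulative) rejection set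
grows by the proposals not kept. -/
def iStep (M : Market D H) (ι : H → ℕ) (κ : D → ℕ) (R : Finset (H × D)) :
    Finset (H × D) :=
  R ∪ univ.filter fun p : H × D => p.2 ∈ hProps M ι R p.1 ∧ p.1 ∉ dKeeps M ι κ R p.2

/-- Rejection set at the end of hospital-proposing DA (interview step). -/
def iRej (M : Market D H) (ι : H → ℕ) (κ : D → ℕ) : Finset (H × D) :=
  (iStep M ι κ)^[Fintype.card D * Fintype.card H] ∅

/-- The interview matching (the hospital-optimal stable many-to-many matching) computed
by hospital-proposing deferred acceptance: pairs `(h, d)` such that `h` interviews `d`. -/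
def interviews (M : Market D H) (ι : H → ℕ) (κ : D → ℕ) : Finset (H × D) :=
  univ.filter fun p : H × D =>
    p.2 ∈ hProps M ι (iRej M ι κ) p.1 ∧ p.1 ∈ dKeeps M ι κ (iRej M ι κ) p.2

/-- Doctor `d` proposes to her best interview partner that has not rejected her. -/
def dProps (M : Market D H) (V : Finset (H × D)) (S : Finset (D × H)) (d : D) :
    Finset H :=
  topN (M.rankDH d) 1 (univ.filter fun h => (h, d) ∈ V ∧ (d, h) ∉ S)

/-- Hospital `h` keeps its best proposal. -/
def hKeeps (M : Market D H) (V : Finset (H × D)) (S : Finset (D × H)) (h : H) :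
    Finset D :=
  topN (M.rankHD h) 1 (univ.filter fun d => h ∈ dProps M V S d)

/-- One round of doctor-proposing DA on preferences restricted to the interview matching `V`. -/
def mStep (M : Market D H) (V : Finset (H × D)) (S : Finset (D × H)) : Finset (D × H) :=
  S ∪ univ.filter fun p : D × H => p.2 ∈ dProps M V S p.1 ∧ p.1 ∉ hKeeps M V S p.2

/-- Rejection set at the end of the doctor-proposing DA of the matching step. -/
def mRej (M : Market D H) (V : Finset (H × D)) : Finset (D × H) :=
  (mStep M V)^[Fintype.card D * Fintype.card H] ∅

/-- The final matching: doctor-proposing DA on preferences restricted to interviews `V`. -/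
def finalMatch (M : Market D H) (V : Finset (H × D)) : Finset (D × H) :=
  univ.filter fun p : D × H =>
    p.2 ∈ dProps M V (mRej M V) p.1 ∧ p.1 ∈ hKeeps M V (mRej M V) p.2

/-- The `(ι,κ)`-matching: the culmination of the two-step process. -/
def ikMatching (M : Market D H) (ι : H → ℕ) (κ : D → ℕ) : Finset (D × H) :=
  finalMatch M (interviews M ι κ)

/-- `(d, h)` is a blocking pair of `μ` (w.r.t. the true, unrestricted preferences). -/
def Blocks (M : Market D H) (μ : Finset (D × H)) (d : D) (h : H) : Prop :=
  M.accD d h ∧ M.accH h d ∧ (d, h) ∉ μ ∧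
    (∀ h', (d, h') ∈ μ → M.rankDH d h < M.rankDH d h') ∧
    (∀ d', (d', h) ∈ μ → M.rankHD h d < M.rankHD h d')

instance (M : Market D H) (μ : Finset (D × H)) (d : D) (h : H) :
    Decidable (Blocks M μ d h) := by
  unfold Blocks; infer_instance

/-- A matching is stable if it admits no blocking pair. -/
def Stable (M : Market D H) (μ : Finset (D × H)) : Prop := ∀ d h, ¬ Blocks M μ d h

/-- `(ι,κ)` is adequate at `M` if the `(ι,κ)`-matching is stable. -/
def Adequate (M : Market D H) (ι : H → ℕ) (κ : D → ℕ) : Prop :=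
  Stable M (ikMatching M ι κ)

/-- One-to-one matching (as a set of pairs). -/
def IsMatching (μ : Finset (D × H)) : Prop :=
  (∀ d h h', (d, h) ∈ μ → (d, h') ∈ μ → h = h') ∧
    (∀ d d' h, (d, h) ∈ μ → (d', h) ∈ μ → d = d')

/-- Common preferences: all doctors rank the hospitals identically, all hospitals rank
the doctors identically, everyone is mutually acceptable (and preferences are strict). -/
def CommonPrefs (M : Market D H) : Prop :=
  M.Strict ∧ (∀ d d', M.rankDH d = M.rankDH d') ∧ (∀ h h', M.rankHD h = M.rankHD h') ∧
    ∀ d h, M.accD d h ∧ M.accH h d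

/-- Number of hospitals matched under `μ`. -/
def matchedHospitals (μ : Finset (D × H)) : ℕ :=
  (univ.filter fun h : H => ∃ d, (d, h) ∈ μ).card

/-- Number of blocking pairs of `μ`. -/
def blockingCount (M : Market D H) (μ : Finset (D × H)) : ℕ :=
  (univ.filter fun p : D × H => Blocks M μ p.1 p.2).card

end Model

/-- `(ι,κ)` is globally adequate: adequate at every (strict) preference profile. -/
def GloballyAdequate (D H : Type*) [Fintype D] [Fintype H] [DecidableEq D] [DecidableEq H]
    (ι : H → ℕ) (κ : D → ℕ) : Prop :=
  ∀ M : Market D H, M.Strict → Adequate M ι κ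

variable {D H : Type*} [Fintype D] [Fintype H] [DecidableEq D] [DecidableEq H]

/-! Cut both enumerations into consecutive blocks of length `l`. In the interview step every
hospital ends up rejected exactly by the doctors of earlier blocks: a hospital always finds its
`l` block-mates available, so it never proposes beyond its own block, and a doctor turns down
precisely the hospitals of later blocks, since the `l` hospitals of its own block all propose to
it. Hence everybody interviews exactly its own block. Inside a block, doctor-proposing deferred
acceptance ends with every doctor rejected exactly by the hospitals ranked above its diagonal
partner, so position `t` is matched with position `t`. Each of the two deferred-acceptance runs is
identified as the only fixed point of its step map below a candidate rejection set that the step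
map preserves.

The assortative matching is stable, because a blocking pair `(d, h)` would need `h` ranked above
`d`'s partner and `d` ranked above `h`'s partner. Conversely, by strong induction on the position,
a stable matching contains every assortative pair, and hence equals the assortative matching. -/

theorem iterate_eq_of_inflationary {α : Type*} [Fintype α]
    {f : Finset α → Finset α} {T : Finset α} (hf : ∀ s, s ⊆ f s)
    (hinv : ∀ s ⊆ T, f s ⊆ T) (hfix : ∀ s ⊆ T, f s = s → T ⊆ s)
    {n : ℕ} (hn : Fintype.card α ≤ n) : f^[n] ∅ = T := by
  have hsub : ∀ k, f^[k] ∅ ⊆ T := by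
    intro k
    induction k with
    | zero => exact empty_subset T
    | succ k ih => rw [Function.iterate_succ_apply']; exact hinv _ ih
  have hgrow : ∀ k, k ≤ #(f^[k] ∅) ∨ f (f^[k] ∅) = f^[k] ∅ := by
    intro k
    induction k with
    | zero => exact Or.inl (Nat.zero_le _)
    | succ k ih =>
      rw [Function.iterate_succ_apply']
      by_cases hk : f (f^[k] ∅) = f^[k] ∅
      · exact Or.inr (by rw [hk, hk])
      · refine Or.inl (ih.resolve_right hk |>.trans_lt ?_)
        exact card_lt_card ((hf _).ssubset_of_ne (Ne.symm hk))
  have hfixed : f (f^[n] ∅) = f^[n] ∅ := by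
    refine (hgrow n).elim (fun hcard => ?_) id
    have huniv : f^[n] ∅ = univ := eq_univ_of_card _ ((card_le_univ _).antisymm (hn.trans hcard))
    rw [huniv]
    exact univ_subset_iff.1 (hf univ)
  exact (hsub n).antisymm (hfix _ (hsub n) hfixed)

section TopN

variable {α : Type*} [Fintype α] [DecidableEq α] {N : ℕ} (e : α ≃ Fin N)

omit [DecidableEq α] in
theorem card_filter_le_val_lt {a c : ℕ} (hc : c ≤ N) :
    #{x | a ≤ (e x : ℕ) ∧ (e x : ℕ) < c} = c - a := by
  rw [← Nat.card_Ico a c]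
  refine card_bij (fun x _ => (e x : ℕ)) (fun x hx => by simpa using hx)
    (fun x _ y _ hxy => e.injective (Fin.val_injective hxy)) fun b hb => ?_
  rw [mem_Ico] at hb
  exact ⟨e.symm ⟨b, hb.2.trans_le hc⟩, by simpa using hb, by simp⟩

omit [Fintype α] in
theorem mem_topN {rank : α → ℕ} {n : ℕ} {s : Finset α} {x : α} :
    x ∈ topN rank n s ↔ x ∈ s ∧ #{y ∈ s | rank y < rank x} < n :=
  mem_filter

variable {e} {a n : ℕ} {s : Finset α} {x : α}

theorem val_lt_add_of_mem_topN (hs : ∀ y, a ≤ (e y : ℕ) → (e y : ℕ) < a + n → y ∈ s)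
    (hx : x ∈ topN (fun y => (e y : ℕ)) n s) : (e x : ℕ) < a + n := by
  by_contra! hax
  have hsub : ({y | a ≤ (e y : ℕ) ∧ (e y : ℕ) < a + n} : Finset α) ⊆
      {y ∈ s | (e y : ℕ) < e x} := by
    intro y hy
    simp only [mem_filter, mem_univ, true_and] at hy ⊢
    exact ⟨hs y hy.1 hy.2, hy.2.trans_le hax⟩
  have hcard := card_le_card hsub
  rw [card_filter_le_val_lt e (hax.trans_lt (e x).isLt).le] at hcard
  exact (mem_topN.1 hx).2.not_ge (by omega)

theorem mem_topN_of_forall_le (hs : ∀ y ∈ s, a ≤ (e y : ℕ)) (hx : x ∈ s)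
    (hxa : (e x : ℕ) < a + n) : x ∈ topN (fun y => (e y : ℕ)) n s := by
  refine mem_topN.2 ⟨hx, ?_⟩
  have hsub : {y ∈ s | (e y : ℕ) < e x} ⊆
      ({y | a ≤ (e y : ℕ) ∧ (e y : ℕ) < e x} : Finset α) := by
    intro y hy
    rw [mem_filter] at hy
    simpa using ⟨hs y hy.1, hy.2⟩
  calc #{y ∈ s | (e y : ℕ) < e x}
      ≤ #{y | a ≤ (e y : ℕ) ∧ (e y : ℕ) < e x} := card_le_card hsub
    _ = e x - a := card_filter_le_val_lt e (e x).isLt.le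
    _ < n := by have := hs x hx; omega

end TopN

theorem div_le_div_iff_lt_div_mul_add {l a b : ℕ} (hl : 0 < l) :
    a / l ≤ b / l ↔ a < b / l * l + l := by
  rw [← Nat.lt_succ_iff, Nat.div_lt_iff_lt_mul hl, Nat.succ_mul]

section CommonMarket

variable {m n : ℕ} (eD : D ≃ Fin m) (eH : H ≃ Fin n)

@[simps]
def commonMarket : Market D H where
  rankDH _ h := eH h
  accD _ _ := true
  rankHD _ d := eD d
  accH _ _ := true

def blockIRej (l : ℕ) : Finset (H × D) := {p | (eD p.2 : ℕ) / l < (eH p.1 : ℕ) / l}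

def blockInterviews (l : ℕ) : Finset (H × D) := {p | (eH p.1 : ℕ) / l = (eD p.2 : ℕ) / l}

def blockMRej (l : ℕ) : Finset (D × H) :=
  {p | (eD p.1 : ℕ) / l = (eH p.2 : ℕ) / l ∧ (eH p.2 : ℕ) < eD p.1}

def assortative : Finset (D × H) := {p | (eD p.1 : ℕ) = eH p.2}

variable {eD eH}

omit [Fintype H] in
theorem hProps_commonMarket (ι : H → ℕ) (R : Finset (H × D)) (h : H) :
    hProps (commonMarket eD eH) ι R h =
      topN (fun d => (eD d : ℕ)) (ι h) {d | (h, d) ∉ R} := by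
  simp only [hProps, commonMarket_accH, true_and]
  rfl

theorem dKeeps_commonMarket (ι : H → ℕ) (κ : D → ℕ) (R : Finset (H × D)) (d : D) :
    dKeeps (commonMarket eD eH) ι κ R d =
      topN (fun h => (eH h : ℕ)) (κ d) {h | d ∈ hProps (commonMarket eD eH) ι R h} := by
  simp only [dKeeps, commonMarket_accD, true_and]
  rfl

variable {l : ℕ} {R : Finset (H × D)}

theorem div_le_div_of_mem_hProps (hl : 0 < l) (hR : R ⊆ blockIRej eD eH l) {h : H} {d : D}
    (hd : d ∈ hProps (commonMarket eD eH) (fun _ => l) R h) :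
    (eD d : ℕ) / l ≤ (eH h : ℕ) / l := by
  rw [hProps_commonMarket] at hd
  refine (div_le_div_iff_lt_div_mul_add hl).2 (val_lt_add_of_mem_topN (fun d' hd' _ => ?_) hd)
  simp only [mem_filter, mem_univ, true_and]
  intro hrej
  have := hR hrej
  simp only [blockIRej, mem_filter, mem_univ, true_and, Nat.div_lt_iff_lt_mul hl] at this
  omega

theorem iStep_subset_blockIRej (hl : 0 < l) (hR : R ⊆ blockIRej eD eH l) :
    iStep (commonMarket eD eH) (fun _ => l) (fun _ => l) R ⊆ blockIRej eD eH l := by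
  rintro ⟨h, d⟩ hp
  rcases mem_union.1 hp with hp | hp
  · exact hR hp
  simp only [mem_filter, mem_univ, true_and] at hp
  obtain ⟨hprop, hrej⟩ := hp
  simp only [blockIRej, mem_filter, mem_univ, true_and]
  refine (div_le_div_of_mem_hProps hl hR hprop).lt_of_ne fun hblock => hrej ?_
  rw [dKeeps_commonMarket]
  refine mem_topN_of_forall_le (a := (eD d : ℕ) / l * l) (fun h' hh' => ?_) (by simpa using hprop)
    (hblock ▸ Nat.lt_div_mul_add hl)
  rw [mem_filter] at hh'
  exact (Nat.le_div_iff_mul_le hl).1 (div_le_div_of_mem_hProps hl hR hh'.2)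

theorem blockIRej_subset_of_iStep_eq (hl : 0 < l) (hR : R ⊆ blockIRej eD eH l)
    (hfix : iStep (commonMarket eD eH) (fun _ => l) (fun _ => l) R = R) :
    blockIRej eD eH l ⊆ R := by
  suffices ∀ t, ∀ d : D, (eD d : ℕ) = t → ∀ h : H,
      (eD d : ℕ) / l < (eH h : ℕ) / l → (h, d) ∈ R by
    rintro ⟨h, d⟩ hp
    exact this _ d rfl h (by simpa [blockIRej] using hp)
  intro t
  induction t using Nat.strong_induction_on with
  | _ t ih =>
  rintro d rfl h hdh
  have hprev : ∀ d' h', (eD d' : ℕ) < eD d →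
      (eD d' : ℕ) / l < (eH h' : ℕ) / l → (h', d') ∈ R :=
    fun d' h' hlt hblock => ih _ hlt d' rfl h' hblock
  by_contra hnot
  refine hnot (hfix ▸ mem_union_right _ (mem_filter.2 ⟨mem_univ _, ?_, fun hkeep => ?_⟩))
  · rw [hProps_commonMarket]
    refine mem_topN_of_forall_le (a := eD d) (fun d' hd' => ?_) (by simpa using hnot)
      (Nat.lt_add_of_pos_right hl)
    by_contra! hlt
    exact (mem_filter.1 hd').2 (hprev d' h hlt ((Nat.div_le_div_right hlt.le).trans_lt hdh))
  -- All `l` hospitals of `d`'s block propose to `d`, and all of them rank above `h`.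
  rw [dKeeps_commonMarket] at hkeep
  refine hdh.not_ge ((div_le_div_iff_lt_div_mul_add hl).2
    (val_lt_add_of_mem_topN (a := (eD d : ℕ) / l * l) (fun h' h₁ h₂ => ?_) hkeep))
  have hblock : (eH h' : ℕ) / l = (eD d : ℕ) / l := by
    have := (div_le_div_iff_lt_div_mul_add hl (a := eH h') (b := eD d)).2 h₂
    have := (Nat.le_div_iff_mul_le hl).2 h₁
    omega
  refine mem_filter.2 ⟨mem_univ _, ?_⟩
  rw [hProps_commonMarket]
  refine mem_topN_of_forall_le (a := (eD d : ℕ) / l * l) (fun d' hd' => ?_) ?_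
    (Nat.lt_div_mul_add hl)
  · by_contra! hlt
    refine (mem_filter.1 hd').2 (hprev d' h' (hlt.trans_le (Nat.div_mul_le_self _ _)) ?_)
    rw [hblock]
    exact (Nat.div_lt_iff_lt_mul hl).2 hlt
  · simp only [mem_filter, mem_univ, true_and]
    intro hrej
    have := hR hrej
    simp only [blockIRej, mem_filter, mem_univ, true_and] at this
    omega

theorem iRej_commonMarket (hl : 0 < l) :
    iRej (commonMarket eD eH) (fun _ => l) (fun _ => l) = blockIRej eD eH l :=
  iterate_eq_of_inflationary (fun _ => subset_union_left)
    (fun _ => iStep_subset_blockIRej hl) (fun _ => blockIRej_subset_of_iStep_eq hl)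
    (by rw [Fintype.card_prod, mul_comm])

theorem mem_hProps_blockIRej (hl : 0 < l) {h : H} {d : D} :
    d ∈ hProps (commonMarket eD eH) (fun _ => l) (blockIRej eD eH l) h ↔
      (eH h : ℕ) / l = (eD d : ℕ) / l := by
  refine ⟨fun hd => ?_, fun hblock => ?_⟩
  · have hle := div_le_div_of_mem_hProps hl subset_rfl hd
    rw [hProps_commonMarket] at hd
    have := (mem_filter.1 (mem_topN.1 hd).1).2
    simp only [blockIRej, mem_filter, mem_univ, true_and, not_lt] at this
    omega
  · rw [hProps_commonMarket]
    refine mem_topN_of_forall_le (a := (eH h : ℕ) / l * l) (fun d' hd' => ?_) ?_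
      ((div_le_div_iff_lt_div_mul_add hl).1 hblock.ge)
    · simp only [blockIRej, mem_filter, mem_univ, true_and, not_lt] at hd'
      exact (Nat.le_div_iff_mul_le hl).1 hd'
    · simp [blockIRej, hblock]

theorem interviews_commonMarket (hl : 0 < l) :
    interviews (commonMarket eD eH) (fun _ => l) (fun _ => l) = blockInterviews eD eH l := by
  ext ⟨h, d⟩
  simp only [interviews, blockInterviews, mem_filter, mem_univ, true_and, iRej_commonMarket hl]
  refine ⟨fun hp => mem_hProps_blockIRej hl |>.1 hp.1, fun hblock => ⟨?_, ?_⟩⟩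
  · exact (mem_hProps_blockIRej hl).2 hblock
  rw [dKeeps_commonMarket]
  refine mem_topN_of_forall_le (a := (eD d : ℕ) / l * l) (fun h' hh' => ?_)
    (by simpa using (mem_hProps_blockIRej hl).2 hblock) (hblock ▸ Nat.lt_div_mul_add hl)
  rw [mem_filter, mem_hProps_blockIRej hl] at hh'
  exact hh'.2 ▸ Nat.div_mul_le_self _ _

variable {S : Finset (D × H)}

theorem le_of_mem_dProps (hS : S ⊆ blockMRej eD eH l) {d : D} {h : H}
    (hh : h ∈ dProps (commonMarket eD eH) (blockInterviews eD eH l) S d) :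
    (eH h : ℕ) ≤ eD d := by
  refine Nat.lt_succ_iff.1 (val_lt_add_of_mem_topN (a := eD d) (fun h' h₁ h₂ => ?_) hh)
  have hdiag : (eH h' : ℕ) = eD d := by omega
  simp only [blockInterviews, mem_filter, mem_univ, true_and, hdiag]
  intro hrej
  have := hS hrej
  simp only [blockMRej, mem_filter, mem_univ, true_and] at this
  omega

theorem mStep_subset_blockMRej (hS : S ⊆ blockMRej eD eH l) :
    mStep (commonMarket eD eH) (blockInterviews eD eH l) S ⊆ blockMRej eD eH l := by
  rintro ⟨d, h⟩ hp
  rcases mem_union.1 hp with hp | hp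
  · exact hS hp
  simp only [mem_filter, mem_univ, true_and] at hp
  obtain ⟨hprop, hrej⟩ := hp
  have hblock := (mem_filter.1 (mem_topN.1 hprop).1).2.1
  simp only [blockInterviews, blockMRej, mem_filter, mem_univ, true_and] at hblock ⊢
  refine ⟨hblock.symm, (le_of_mem_dProps hS hprop).lt_of_ne fun hdiag => hrej ?_⟩
  exact mem_topN_of_forall_le (a := eH h) (fun d' hd' => le_of_mem_dProps hS (mem_filter.1 hd').2)
    (by simpa using hprop) (by omega)

theorem blockMRej_subset_of_mStep_eq (hS : S ⊆ blockMRej eD eH l)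
    (hfix : mStep (commonMarket eD eH) (blockInterviews eD eH l) S = S) :
    blockMRej eD eH l ⊆ S := by
  suffices ∀ t, ∀ h : H, (eH h : ℕ) = t → ∀ d : D,
      (eD d : ℕ) / l = (eH h : ℕ) / l → (eH h : ℕ) < eD d → (d, h) ∈ S by
    rintro ⟨d, h⟩ hp
    simp only [blockMRej, mem_filter, mem_univ, true_and] at hp
    exact this _ h rfl d hp.1 hp.2
  intro t
  induction t using Nat.strong_induction_on with
  | _ t ih =>
  rintro h rfl d hblock hlt
  have hprop : ∀ d' : D, (eD d' : ℕ) / l = (eH h : ℕ) / l → (eH h : ℕ) ≤ eD d' →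
      (d', h) ∉ S →
      h ∈ dProps (commonMarket eD eH) (blockInterviews eD eH l) S d' := by
    intro d' hblock' hle hnot
    refine mem_topN_of_forall_le (a := eH h) (fun h' hh' => ?_) ?_ (Nat.lt_succ_self _)
    · by_contra! hlt'
      obtain ⟨hV, hnS⟩ := (mem_filter.1 hh').2
      simp only [blockInterviews, mem_filter, mem_univ, true_and] at hV
      exact hnS (ih _ hlt' h' rfl d' hV.symm (by omega))
    · simp [blockInterviews, hblock', hnot]
  by_contra hnot
  refine hnot (hfix ▸ mem_union_right _
    (mem_filter.2 ⟨mem_univ _, hprop d hblock hlt.le hnot, fun hkeep => ?_⟩))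
  -- The doctor on `h`'s diagonal proposes to `h`, and `h` prefers it to `d`.
  refine hlt.not_ge (Nat.lt_succ_iff.1
    (val_lt_add_of_mem_topN (a := eH h) (fun d' h₁ h₂ => ?_) hkeep))
  have hdiag : (eD d' : ℕ) = eH h := by omega
  refine mem_filter.2 ⟨mem_univ _, hprop d' (by rw [hdiag]) hdiag.ge fun hrej => ?_⟩
  have := hS hrej
  simp only [blockMRej, mem_filter, mem_univ, true_and] at this
  omega

theorem mRej_commonMarket :
    mRej (commonMarket eD eH) (blockInterviews eD eH l) = blockMRej eD eH l :=
  iterate_eq_of_inflationary (fun _ => subset_union_left)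
    (fun _ => mStep_subset_blockMRej) (fun _ => blockMRej_subset_of_mStep_eq)
    (Fintype.card_prod D H).le

theorem mem_dProps_blockMRej {d : D} {h : H} :
    h ∈ dProps (commonMarket eD eH) (blockInterviews eD eH l) (blockMRej eD eH l) d ↔
      (eD d : ℕ) = eH h := by
  refine ⟨fun hh => ?_, fun hdiag => ?_⟩
  · have hle := le_of_mem_dProps subset_rfl hh
    obtain ⟨hV, hnS⟩ := (mem_filter.1 (mem_topN.1 hh).1).2
    simp only [blockInterviews, blockMRej, mem_filter, mem_univ, true_and, not_and, not_lt]
      at hV hnS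
    exact le_antisymm (hnS hV.symm) hle
  · refine mem_topN_of_forall_le (a := eD d) (fun h' hh' => ?_) ?_ (by omega)
    · obtain ⟨hV, hnS⟩ := (mem_filter.1 hh').2
      simp only [blockInterviews, blockMRej, mem_filter, mem_univ, true_and, not_and, not_lt]
        at hV hnS
      exact hnS hV.symm
    · simp [blockInterviews, blockMRej, hdiag]

theorem finalMatch_commonMarket :
    finalMatch (commonMarket eD eH) (blockInterviews eD eH l) = assortative eD eH := by
  ext ⟨d, h⟩
  simp only [finalMatch, assortative, mem_filter, mem_univ, true_and, mRej_commonMarket,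
    mem_dProps_blockMRej]
  refine ⟨And.left, fun hdiag => ⟨hdiag, ?_⟩⟩
  refine mem_topN_of_forall_le (a := eH h) (fun d' hd' => ?_) (by simpa [mem_dProps_blockMRej])
    (by omega)
  rw [mem_filter, mem_dProps_blockMRej] at hd'
  exact hd'.2.ge

omit [DecidableEq D] [DecidableEq H] in
theorem stable_assortative : Stable (commonMarket eD eH) (assortative eD eH) := by
  rintro d h ⟨-, -, -, hd, hh⟩
  simp only [assortative, mem_filter, mem_univ, true_and, commonMarket_rankDH,
    commonMarket_rankHD] at hd hh
  have hlt : (eH h : ℕ) < eD d := by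
    by_cases hdH : (eD d : ℕ) < n
    · simpa using hd (eH.symm ⟨eD d, hdH⟩) (by simp)
    · exact (eH h).isLt.trans_le (not_lt.1 hdH)
  have := hh (eD.symm ⟨eH h, hlt.trans (eD d).isLt⟩) (by simp)
  simp only [Equiv.apply_symm_apply] at this
  omega

theorem assortative_subset_of_stable {μ : Finset (D × H)} (hμ : IsMatching μ)
    (hst : Stable (commonMarket eD eH) μ) : assortative eD eH ⊆ μ := by
  suffices ∀ t, ∀ d h, (eD d : ℕ) = t → (eH h : ℕ) = t → (d, h) ∈ μ by
    rintro ⟨d, h⟩ hp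
    simp only [assortative, mem_filter, mem_univ, true_and] at hp
    exact this _ d h rfl hp.symm
  intro t
  induction t using Nat.strong_induction_on with
  | _ t ih =>
  rintro d h rfl hh
  by_contra hnot
  refine hst d h ⟨rfl, rfl, hnot, fun h' hh' => ?_, fun d' hd' => ?_⟩
  · simp only [commonMarket_rankDH]
    by_contra! hle
    rcases hle.lt_or_eq with hlt | heq
    · have hlt' : (eH h' : ℕ) < eD d := hh ▸ hlt
      have hpartner := ih _ hlt' (eD.symm ⟨eH h', hlt'.trans (eD d).isLt⟩) h' (by simp) rfl
      have := congrArg (fun x => (eD x : ℕ)) (hμ.2 _ _ _ hpartner hh')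
      simp only [Equiv.apply_symm_apply] at this
      omega
    · exact hnot (eH.injective (Fin.ext heq) ▸ hh')
  · simp only [commonMarket_rankHD]
    by_contra! hle
    rcases hle.lt_or_eq with hlt | heq
    · have hlt' : (eD d' : ℕ) < eH h := hh ▸ hlt
      have hpartner := ih _ hlt d' (eH.symm ⟨eD d', hlt'.trans (eH h).isLt⟩) rfl (by simp)
      have := congrArg (fun x => (eH x : ℕ)) (hμ.1 _ _ _ hpartner hd')
      simp only [Equiv.apply_symm_apply] at this
      omega
    · exact hnot (eD.injective (Fin.ext heq) ▸ hd')

theorem eq_assortative_of_stable {μ : Finset (D × H)} (hμ : IsMatching μ)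
    (hst : Stable (commonMarket eD eH) μ) : μ = assortative eD eH := by
  have hsub := assortative_subset_of_stable hμ hst
  refine subset_antisymm ?_ hsub
  rintro ⟨d, h⟩ hp
  simp only [assortative, mem_filter, mem_univ, true_and]
  rcases le_total (eD d : ℕ) (eH h) with hle | hle
  · have hpartner : (d, eH.symm ⟨eD d, hle.trans_lt (eH h).isLt⟩) ∈ μ :=
      hsub (by simp [assortative])
    simp [hμ.1 _ _ _ hp hpartner]
  · have hpartner : (eD.symm ⟨eH h, hle.trans_lt (eD d).isLt⟩, h) ∈ μ :=
      hsub (by simp [assortative])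
    simp [hμ.2 _ _ _ hp hpartner]

end CommonMarket

theorem equal_homogeneous_adequate_general
    (M : Market D H)
    (eD : D ≃ Fin (Fintype.card D)) (eH : H ≃ Fin (Fintype.card H))
    (hrd : ∀ (d : D) (h : H), M.rankDH d h = (eH h : ℕ))
    (hrh : ∀ (h : H) (d : D), M.rankHD h d = (eD d : ℕ))
    (hacc : ∀ (d : D) (h : H), M.accD d h ∧ M.accH h d)
    (l : ℕ) (hl : 1 ≤ l) :
    Adequate M (fun _ => l) (fun _ => l) ∧
    (∀ (i : Fin (Fintype.card D)) (j : Fin (Fintype.card H)), (i : ℕ) = (j : ℕ) →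
      (eD.symm i, eH.symm j) ∈ ikMatching M (fun _ => l) (fun _ => l)) ∧
    (∀ μ : Finset (D × H), IsMatching μ → Stable M μ →
      μ = ikMatching M (fun _ => l) (fun _ => l)) := by
  obtain rfl : M = commonMarket eD eH := by
    cases M
    simp only [commonMarket, Market.mk.injEq]
    exact ⟨funext₂ hrd, funext₂ fun d h => (hacc d h).1, funext₂ hrh,
      funext₂ fun h d => (hacc d h).2⟩
  have hmatch : ikMatching (commonMarket eD eH) (fun _ => l) (fun _ => l) = assortative eD eH := by
    rw [ikMatching, interviews_commonMarket hl, finalMatch_commonMarket]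
  simp only [Adequate, hmatch]
  exact ⟨stable_assortative, fun i j hij => by simp [assortative, hij],
    fun μ hμ hst => eq_assortative_of_stable hμ hst⟩

/-- Under common preferences, a homogeneous arrangement `(l,k)` with
`l = k ≤ min {|D|, |H|}` is adequate: the `(l,l)`-matching matches the `t`-th best
doctor with the `t`-th best hospital for every `t`, and this is the unique stable
matching. -/
theorem equal_homogeneous_adequate
    (M : Market D H)
    (eD : D ≃ Fin (Fintype.card D)) (eH : H ≃ Fin (Fintype.card H))
    (hrd : ∀ (d : D) (h : H), M.rankDH d h = (eH h : ℕ))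
    (hrh : ∀ (h : H) (d : D), M.rankHD h d = (eD d : ℕ))
    (hacc : ∀ (d : D) (h : H), M.accD d h ∧ M.accH h d)
    (l : ℕ) (hl : 1 ≤ l) (hlmin : l ≤ min (Fintype.card D) (Fintype.card H)) :
    Adequate M (fun _ => l) (fun _ => l) ∧
    (∀ (i : Fin (Fintype.card D)) (j : Fin (Fintype.card H)), (i : ℕ) = (j : ℕ) →
      (eD.symm i, eH.symm j) ∈ ikMatching M (fun _ => l) (fun _ => l)) ∧
    (∀ μ : Finset (D × H), IsMatching μ → Stable M μ →
      μ = ikMatching M (fun _ => l) (fun _ => l)) :=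
  equal_homogeneous_adequate_general M eD eH hrd hrh hacc l hl
end

section
/- Under common preferences, a homogeneous arrangement (l,k) with both l ≥ min{|D|,|H|} and k ≥ min{|D|,|H|} is adequate: every doctor d_t with t ≤ min{|D|,|H|} interviews h_t and the final matching equals the unique stable matching. -/
/- Formal model of the two-step interview-then-match process of
Echenique-et-al-style markets: Step 1 computes the interview matching by
hospital-proposing deferred acceptance (with responsive, capacity-constrained
choice functions); Step 2 computes the final one-to-one matching by
doctor-proposing deferred acceptance on preferences restricted to interview
partners. -/

open Finset

variable {D H : Type*} [Fintype D] [Fintype H] [DecidableEq D] [DecidableEq H]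

section Proof12

set_option linter.unusedSectionVars false
set_option maxHeartbeats 1000000

variable {D H : Type*} [Fintype D] [Fintype H] [DecidableEq D] [DecidableEq H]

lemma card_filter_comp_equiv {α : Type*} [Fintype α] [DecidableEq α] {n : ℕ}
    (e : α ≃ Fin n) (P : ℕ → Prop) [DecidablePred P] :
    (univ.filter fun a => P (e a : ℕ)).card = ((Finset.range n).filter P).card := by
  refine Finset.card_bij (fun a _ => ((e a : ℕ))) ?_ ?_ ?_
  · intro a ha
    simp only [mem_filter, mem_univ, true_and] at ha
    simp only [mem_filter, mem_range]
    exact ⟨(e a).isLt, ha⟩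
  · intro a _ b _ hab
    exact e.injective (Fin.val_injective hab)
  · intro b hb
    simp only [mem_filter, mem_range] at hb
    refine ⟨e.symm ⟨b, hb.1⟩, ?_, by simp⟩
    simp only [mem_filter, mem_univ, true_and, Equiv.apply_symm_apply]
    exact hb.2

lemma mem_topN_equiv {α : Type*} [Fintype α] [DecidableEq α] {n : ℕ} (e : α ≃ Fin n)
    (rank : α → ℕ) (hrank : ∀ a, rank a = (e a : ℕ))
    (P : ℕ → Prop) [DecidablePred P] (c : ℕ) (s : Finset α)
    (hs : ∀ a, a ∈ s ↔ P (e a)) (x : α) :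
    x ∈ topN rank c s ↔ P (e x : ℕ) ∧ ((Finset.range (e x : ℕ)).filter P).card < c := by
  have hsf : (s.filter fun y => rank y < rank x) =
      (univ.filter fun y => P (e y : ℕ) ∧ (e y : ℕ) < (e x : ℕ)) := by
    ext y
    simp only [mem_filter, mem_univ, true_and, hs, hrank]
  have hr : ((Finset.range n).filter fun i => P i ∧ i < (e x : ℕ)) =
      (Finset.range (e x : ℕ)).filter P := by
    ext i
    simp only [mem_filter, mem_range]
    constructor
    · rintro ⟨-, h1, h2⟩; exact ⟨h2, h1⟩
    · rintro ⟨h1, h2⟩; exact ⟨h1.trans (e x).isLt, h2, h1⟩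
  rw [topN, mem_filter, hs, hsf,
    card_filter_comp_equiv e (fun i => P i ∧ i < (e x : ℕ)), hr]

/-- The rejection set after the interview step. -/
def Rstar (eD : D ≃ Fin (Fintype.card D)) (eH : H ≃ Fin (Fintype.card H)) (l k : ℕ) :
    Finset (H × D) :=
  univ.filter fun p => (eD p.2 : ℕ) < l ∧ k ≤ (eH p.1 : ℕ)

/-- The interview matching. -/
def Vstar (eD : D ≃ Fin (Fintype.card D)) (eH : H ≃ Fin (Fintype.card H)) (l k : ℕ) :
    Finset (H × D) :=
  univ.filter fun p => (eD p.2 : ℕ) < l ∧ (eH p.1 : ℕ) < k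

/-- Rejection sets of the matching step. -/
def Sset (eD : D ≃ Fin (Fintype.card D)) (eH : H ≃ Fin (Fintype.card H)) (l k r : ℕ) :
    Finset (D × H) :=
  univ.filter fun p => (eD p.1 : ℕ) < l ∧
    (eH p.2 : ℕ) < min r (min (eD p.1 : ℕ) (min k (Fintype.card H)))

section Step1

variable (M : Market D H) (eD : D ≃ Fin (Fintype.card D)) (eH : H ≃ Fin (Fintype.card H))
    (hrd : ∀ (d : D) (h : H), M.rankDH d h = (eH h : ℕ))
    (hrh : ∀ (h : H) (d : D), M.rankHD h d = (eD d : ℕ))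
    (hacc : ∀ (d : D) (h : H), M.accD d h ∧ M.accH h d)
    (l k : ℕ)
    (hl : min (Fintype.card D) (Fintype.card H) ≤ l)
    (hk : min (Fintype.card D) (Fintype.card H) ≤ k)

include hrd hrh hacc hl hk

lemma mem_hProps_empty (h : H) (d : D) :
    d ∈ hProps M (fun _ => l) (∅ : Finset (H × D)) h ↔ (eD d : ℕ) < l := by
  rw [hProps, mem_topN_equiv eD (M.rankHD h) (hrh h) (fun _ => True) _ _
    (fun a => by simp [(hacc a h).2])]
  simp

lemma mem_dKeeps_empty (d : D) (h : H) :
    h ∈ dKeeps M (fun _ => l) (fun _ => k) (∅ : Finset (H × D)) d ↔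
      (eD d : ℕ) < l ∧ (eH h : ℕ) < k := by
  rw [dKeeps, mem_topN_equiv eH (fun h => M.rankDH d h) (hrd d)
    (fun _ => (eD d : ℕ) < l) _ _
    (fun a => by simp [(hacc d a).1, mem_hProps_empty M eD eH hrd hrh hacc l k hl hk])]
  by_cases hdl : (eD d : ℕ) < l
  · simp [hdl]
  · simp [hdl]

lemma iStep_empty :
    iStep M (fun _ => l) (fun _ => k) ∅ = Rstar eD eH l k := by
  ext ⟨h, d⟩
  simp only [iStep, Rstar, empty_union, mem_filter, mem_univ, true_and,
    mem_hProps_empty M eD eH hrd hrh hacc l k hl hk,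
    mem_dKeeps_empty M eD eH hrd hrh hacc l k hl hk]
  omega

lemma mem_hProps_Rstar (h : H) (d : D) :
    d ∈ hProps M (fun _ => l) (Rstar eD eH l k) h ↔
      (eD d : ℕ) < l ∧ (eH h : ℕ) < k := by
  rw [hProps, mem_topN_equiv eD (M.rankHD h) (hrh h)
    (fun i => ¬(i < l ∧ k ≤ (eH h : ℕ))) _ _
    (fun a => by simp [Rstar, (hacc a h).2])]
  by_cases hkh : (eH h : ℕ) < k
  · rw [Finset.filter_true_of_mem (fun i _ => by omega), Finset.card_range]
    omega
  · have h1 : (eD d : ℕ) < Fintype.card D := (eD d).isLt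
    have h2 : (eH h : ℕ) < Fintype.card H := (eH h).isLt
    constructor
    · rintro ⟨hp, -⟩; omega
    · rintro ⟨-, h3⟩; omega

lemma mem_dKeeps_Rstar (d : D) (h : H) :
    h ∈ dKeeps M (fun _ => l) (fun _ => k) (Rstar eD eH l k) d ↔
      (eD d : ℕ) < l ∧ (eH h : ℕ) < k := by
  rw [dKeeps, mem_topN_equiv eH (fun h => M.rankDH d h) (hrd d)
    (fun i => (eD d : ℕ) < l ∧ i < k) _ _
    (fun a => by simp [(hacc d a).1, mem_hProps_Rstar M eD eH hrd hrh hacc l k hl hk])]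
  constructor
  · rintro ⟨hp, -⟩; exact hp
  · rintro ⟨h1, h2⟩
    refine ⟨⟨h1, h2⟩, ?_⟩
    have := Finset.card_filter_le (Finset.range (eH h : ℕ))
      (fun i => (eD d : ℕ) < l ∧ i < k)
    rw [Finset.card_range] at this
    omega

lemma iStep_Rstar :
    iStep M (fun _ => l) (fun _ => k) (Rstar eD eH l k) = Rstar eD eH l k := by
  ext ⟨h, d⟩
  simp only [iStep, mem_union, mem_filter, mem_univ, true_and,
    mem_hProps_Rstar M eD eH hrd hrh hacc l k hl hk,
    mem_dKeeps_Rstar M eD eH hrd hrh hacc l k hl hk]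
  tauto

lemma iRej_eq : iRej M (fun _ => l) (fun _ => k) = Rstar eD eH l k := by
  rw [iRej]
  rcases Nat.eq_zero_or_pos (Fintype.card D * Fintype.card H) with h0 | hpos
  · rw [h0, Function.iterate_zero, id]
    have huniv : (univ : Finset (H × D)) = ∅ := by
      rw [← Finset.card_eq_zero, Finset.card_univ, Fintype.card_prod, Nat.mul_comm]
      exact h0
    have : Rstar eD eH l k ⊆ (∅ : Finset (H × D)) := huniv ▸ Finset.subset_univ _
    exact (Finset.subset_empty.mp this).symm
  · obtain ⟨n, hn⟩ : ∃ n, Fintype.card D * Fintype.card H = n + 1 :=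
      ⟨_, (Nat.succ_pred_eq_of_pos hpos).symm⟩
    rw [hn, Function.iterate_succ_apply,
      iStep_empty M eD eH hrd hrh hacc l k hl hk,
      Function.iterate_fixed (iStep_Rstar M eD eH hrd hrh hacc l k hl hk)]

lemma interviews_eq :
    interviews M (fun _ => l) (fun _ => k) = Vstar eD eH l k := by
  ext ⟨h, d⟩
  simp only [interviews, Vstar, mem_filter, mem_univ, true_and,
    iRej_eq M eD eH hrd hrh hacc l k hl hk,
    mem_hProps_Rstar M eD eH hrd hrh hacc l k hl hk,
    mem_dKeeps_Rstar M eD eH hrd hrh hacc l k hl hk]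
  tauto

end Step1


section Step2

variable (M : Market D H) (eD : D ≃ Fin (Fintype.card D)) (eH : H ≃ Fin (Fintype.card H))
    (hrd : ∀ (d : D) (h : H), M.rankDH d h = (eH h : ℕ))
    (hrh : ∀ (h : H) (d : D), M.rankHD h d = (eD d : ℕ))
    (hacc : ∀ (d : D) (h : H), M.accD d h ∧ M.accH h d)
    (l k : ℕ)
    (hl : min (Fintype.card D) (Fintype.card H) ≤ l)
    (hk : min (Fintype.card D) (Fintype.card H) ≤ k)

include hrd hrh hacc hl hk

lemma mem_dProps_Sset (r : ℕ) (d : D) (h : H) :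
    h ∈ dProps M (Vstar eD eH l k) (Sset eD eH l k r) d ↔
      (eD d : ℕ) < l ∧
      (eH h : ℕ) = min r (min (eD d : ℕ) (min k (Fintype.card H))) ∧
      min r (min (eD d : ℕ) (min k (Fintype.card H))) < k := by
  rw [dProps, mem_topN_equiv eH (M.rankDH d) (hrd d)
    (fun i => ((eD d : ℕ) < l ∧ i < k) ∧
      ¬((eD d : ℕ) < l ∧ i < min r (min (eD d : ℕ) (min k (Fintype.card H))))) _ _
    (fun a => by simp only [mem_filter, mem_univ, true_and, Vstar, Sset])]
  rw [Nat.lt_one_iff, Finset.card_eq_zero, Finset.filter_eq_empty_iff]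
  have h2 : (eH h : ℕ) < Fintype.card H := (eH h).isLt
  constructor
  · rintro ⟨hp, hall⟩
    rcases Nat.lt_or_ge (min r (min (eD d : ℕ) (min k (Fintype.card H)))) ((eH h : ℕ))
      with hlt | hge
    · have hna := hall (Finset.mem_range.mpr hlt)
      omega
    · omega
  · rintro ⟨hq1, hq2, hq3⟩
    refine ⟨by omega, ?_⟩
    intro i hi
    rw [Finset.mem_range] at hi
    omega

lemma mem_hKeeps_Sset (r : ℕ) (h : H) (d : D) :
    d ∈ hKeeps M (Vstar eD eH l k) (Sset eD eH l k r) h ↔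
      h ∈ dProps M (Vstar eD eH l k) (Sset eD eH l k r) d ∧ (eD d : ℕ) = (eH h : ℕ) := by
  rw [hKeeps, mem_topN_equiv eD (M.rankHD h) (hrh h)
    (fun t => t < l ∧
      (eH h : ℕ) = min r (min t (min k (Fintype.card H))) ∧
      min r (min t (min k (Fintype.card H))) < k) _ _
    (fun a => by
      simp only [mem_filter, mem_univ, true_and,
        mem_dProps_Sset M eD eH hrd hrh hacc l k hl hk r a h])]
  rw [mem_dProps_Sset M eD eH hrd hrh hacc l k hl hk r d h]
  rw [Nat.lt_one_iff, Finset.card_eq_zero, Finset.filter_eq_empty_iff]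
  have h1 : (eD d : ℕ) < Fintype.card D := (eD d).isLt
  have h2 : (eH h : ℕ) < Fintype.card H := (eH h).isLt
  constructor
  · rintro ⟨⟨hq1, hq2, hq3⟩, hall⟩
    refine ⟨⟨hq1, hq2, hq3⟩, ?_⟩
    rcases Nat.lt_or_ge ((eH h : ℕ)) ((eD d : ℕ)) with hlt | hge
    · have hna := hall (Finset.mem_range.mpr hlt)
      omega
    · omega
  · rintro ⟨⟨hq1, hq2, hq3⟩, heq⟩
    refine ⟨⟨hq1, hq2, hq3⟩, ?_⟩
    intro i hi
    rw [Finset.mem_range] at hi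
    omega

lemma mStep_Sset (r : ℕ) :
    mStep M (Vstar eD eH l k) (Sset eD eH l k r) = Sset eD eH l k (r + 1) := by
  ext ⟨d, h⟩
  have h1 : (eD d : ℕ) < Fintype.card D := (eD d).isLt
  have h2 : (eH h : ℕ) < Fintype.card H := (eH h).isLt
  simp only [mStep, mem_union, mem_filter, mem_univ, true_and,
    mem_dProps_Sset M eD eH hrd hrh hacc l k hl hk r,
    mem_hKeeps_Sset M eD eH hrd hrh hacc l k hl hk r]
  simp only [Sset, mem_filter, mem_univ, true_and]
  omega

lemma iterate_mStep (r : ℕ) :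
    (mStep M (Vstar eD eH l k))^[r] ∅ =
      Sset eD eH l k (min r (min (Fintype.card D) (Fintype.card H))) := by
  induction r with
  | zero =>
      rw [Function.iterate_zero_apply]
      ext ⟨d, h⟩
      simp only [Sset, notMem_empty, mem_filter, mem_univ, true_and, false_iff]
      omega
  | succ n ih =>
      rw [Function.iterate_succ_apply', ih,
        mStep_Sset M eD eH hrd hrh hacc l k hl hk]
      ext ⟨d, h⟩
      have h1 : (eD d : ℕ) < Fintype.card D := (eD d).isLt
      have h2 : (eH h : ℕ) < Fintype.card H := (eH h).isLt
      simp only [Sset, mem_filter, mem_univ, true_and]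
      omega

lemma mRej_eq :
    mRej M (Vstar eD eH l k) =
      Sset eD eH l k (min (Fintype.card D) (Fintype.card H)) := by
  rw [mRej, iterate_mStep M eD eH hrd hrh hacc l k hl hk]
  have hm : min (Fintype.card D) (Fintype.card H) ≤ Fintype.card D * Fintype.card H := by
    rcases Nat.eq_zero_or_pos (Fintype.card D) with h | h
    · simp [h]
    · exact le_trans (min_le_right _ _) (Nat.le_mul_of_pos_left _ h)
  rw [min_eq_right hm]

lemma finalMatch_eq :
    finalMatch M (Vstar eD eH l k) =
      univ.filter fun p : D × H => (eD p.1 : ℕ) = (eH p.2 : ℕ) := by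
  ext ⟨d, h⟩
  have h1 : (eD d : ℕ) < Fintype.card D := (eD d).isLt
  have h2 : (eH h : ℕ) < Fintype.card H := (eH h).isLt
  simp only [finalMatch, mem_filter, mem_univ, true_and,
    mRej_eq M eD eH hrd hrh hacc l k hl hk,
    mem_dProps_Sset M eD eH hrd hrh hacc l k hl hk,
    mem_hKeeps_Sset M eD eH hrd hrh hacc l k hl hk]
  omega

end Step2

end Proof12
/-- Under common preferences, a homogeneous arrangement `(l,k)` with
`l, k ≥ min {|D|, |H|}` is adequate: every doctor `d_t` with `t ≤ min {|D|, |H|}`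
interviews `h_t`, and the final matching is the unique stable matching (matching
`d_t` with `h_t`). -/
theorem high_homogeneous_adequate
    (M : Market D H)
    (eD : D ≃ Fin (Fintype.card D)) (eH : H ≃ Fin (Fintype.card H))
    (hrd : ∀ (d : D) (h : H), M.rankDH d h = (eH h : ℕ))
    (hrh : ∀ (h : H) (d : D), M.rankHD h d = (eD d : ℕ))
    (hacc : ∀ (d : D) (h : H), M.accD d h ∧ M.accH h d)
    (l k : ℕ)
    (hl : min (Fintype.card D) (Fintype.card H) ≤ l)
    (hk : min (Fintype.card D) (Fintype.card H) ≤ k) :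
    Adequate M (fun _ => l) (fun _ => k) ∧
    (∀ (i : Fin (Fintype.card D)) (j : Fin (Fintype.card H)), (i : ℕ) = (j : ℕ) →
      (eH.symm j, eD.symm i) ∈ interviews M (fun _ => l) (fun _ => k) ∧
      (eD.symm i, eH.symm j) ∈ ikMatching M (fun _ => l) (fun _ => k)) := by
  have hμ : ikMatching M (fun _ => l) (fun _ => k) =
      univ.filter fun p : D × H => (eD p.1 : ℕ) = (eH p.2 : ℕ) := by
    rw [ikMatching, interviews_eq M eD eH hrd hrh hacc l k hl hk,
      finalMatch_eq M eD eH hrd hrh hacc l k hl hk]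
  constructor
  · unfold Adequate
    rw [hμ]
    intro d h hb
    obtain ⟨-, -, hnm, hbd, hbh⟩ := hb
    simp only [mem_filter, mem_univ, true_and] at hnm
    have h1 : (eD d : ℕ) < Fintype.card D := (eD d).isLt
    have h2 : (eH h : ℕ) < Fintype.card H := (eH h).isLt
    rcases lt_trichotomy ((eD d : ℕ)) ((eH h : ℕ)) with hlt | heq | hgt
    · have hm : ((eD d : ℕ)) < Fintype.card H := lt_trans hlt h2
      have hmem : (d, eH.symm ⟨(eD d : ℕ), hm⟩) ∈
          univ.filter (fun p : D × H => (eD p.1 : ℕ) = (eH p.2 : ℕ)) := by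
        simp
      have hc := hbd _ hmem
      rw [hrd, hrd] at hc
      simp only [Equiv.apply_symm_apply] at hc
      omega
    · exact hnm heq
    · have hm : ((eH h : ℕ)) < Fintype.card D := lt_trans hgt h1
      have hmem : (eD.symm ⟨(eH h : ℕ), hm⟩, h) ∈
          univ.filter (fun p : D × H => (eD p.1 : ℕ) = (eH p.2 : ℕ)) := by
        simp
      have hc := hbh _ hmem
      rw [hrh, hrh] at hc
      simp only [Equiv.apply_symm_apply] at hc
      omega
  · intro i j hij
    have hi : (i : ℕ) < Fintype.card D := i.isLt
    have hj : (j : ℕ) < Fintype.card H := j.isLt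
    constructor
    · rw [interviews_eq M eD eH hrd hrh hacc l k hl hk]
      simp only [Vstar, mem_filter, mem_univ, true_and, Equiv.apply_symm_apply]
      omega
    · rw [hμ]
      simp only [mem_filter, mem_univ, true_and, Equiv.apply_symm_apply]
      exact hij
end

section
/- Fix the hospitals' common interview capacity at l and suppose preferences are common. If either k' < k ≤ l or l ≤ k < k', then the (l,k')-matching has at least as many blocking pairs and a weakly lower match rate (fraction of matched positions) than the (l,k)-matching. -/
/- Formal model of the two-step interview-then-match process of
Echenique-et-al-style markets: Step 1 computes the interview matching by
hospital-proposing deferred acceptance (with responsive, capacity-constrained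
choice functions); Step 2 computes the final one-to-one matching by
doctor-proposing deferred acceptance on preferences restricted to interview
partners. -/

open Finset

variable {D H : Type*} [Fintype D] [Fintype H] [DecidableEq D] [DecidableEq H]

/-
With common preferences both rounds of deferred acceptance can be run in closed form. Identify
doctors and hospitals with their positions `x < n` and `y < m` in the common rankings. In the
interview step the hospitals fall into consecutive blocks of `k` and the doctors into blocks of
`l`, and the `b`-th hospital block interviews exactly the `b`-th doctor block; in the matching
step the `r`-th doctor of a block takes the `r`-th hospital of the corresponding block. So `x` and
`y` are matched iff `(x / l, x % l) = (y / k, y % k)`.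

Seen from the side with the shorter blocks (length `a ≤ b`), this matching is the graph of the
strictly increasing map `ψ x = x + x / a * (b - a)`, and the positions blocking with `x` are the
unmatched ones below `min (ψ x) P`, where `P` is the size of the other side; there are
`min (ψ x) P - #{x' < x | ψ x' < P}` of them. Both `k' < k ≤ l` (shorter hospital blocks) and
`l ≤ k < k'` (longer hospital blocks) raise `ψ` pointwise, which can only lose matched pairs and
create blocking pairs.
-/

section RankIndex

variable {α : Type*} [Fintype α] {f : α → ℕ}

def rankIndex (f : α → ℕ) (a : α) : ℕ := (univ.filter fun b => f b < f a).card

lemma rankIndex_lt_rankIndex_iff {a b : α} : rankIndex f a < rankIndex f b ↔ f a < f b := by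
  constructor
  · intro h
    by_contra! hba
    exact h.not_ge (card_le_card fun c hc => by
      simp only [mem_filter, mem_univ, true_and] at hc ⊢; omega)
  · intro h
    refine card_lt_card ⟨fun c hc => by
      simp only [mem_filter, mem_univ, true_and] at hc ⊢; omega, fun hsub => ?_⟩
    exact lt_irrefl _ (mem_filter.1 (hsub (mem_filter.2 ⟨mem_univ a, h⟩))).2

lemma rankIndex_lt_card (a : α) : rankIndex f a < Fintype.card α :=
  card_lt_univ_of_notMem (x := a) (by simp)

lemma rankIndex_injective (hf : Function.Injective f) : Function.Injective (rankIndex f) := by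
  intro a b hab
  apply hf
  rcases lt_trichotomy (f a) (f b) with h | h | h
  · exact absurd hab (rankIndex_lt_rankIndex_iff.2 h).ne
  · exact h
  · exact absurd hab (rankIndex_lt_rankIndex_iff.2 h).ne'

lemma image_rankIndex [DecidableEq α] (hf : Function.Injective f) :
    univ.image (rankIndex f) = range (Fintype.card α) :=
  eq_of_subset_of_card_le (fun i hi => by
      obtain ⟨a, -, rfl⟩ := mem_image.1 hi
      exact mem_range.2 (rankIndex_lt_card a))
    (by rw [card_range, card_image_of_injective _ (rankIndex_injective hf), card_univ])

lemma forall_rankIndex_iff [DecidableEq α] (hf : Function.Injective f) {q : ℕ → Prop} :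
    (∀ a, q (rankIndex f a)) ↔ ∀ i < Fintype.card α, q i := by
  refine ⟨fun hq i hi => ?_, fun hq a => hq _ (rankIndex_lt_card a)⟩
  rw [← mem_range, ← image_rankIndex hf] at hi
  obtain ⟨a, -, rfl⟩ := mem_image.1 hi
  exact hq a

lemma card_filter_rankIndex [DecidableEq α] (hf : Function.Injective f) (p : ℕ → Prop)
    [DecidablePred p] :
    (univ.filter fun a => p (rankIndex f a)).card = ((range (Fintype.card α)).filter p).card := by
  rw [← image_rankIndex hf, filter_image, card_image_of_injective _ (rankIndex_injective hf)]

lemma card_filter_rankIndex_prod [DecidableEq α] {β : Type*} [Fintype β] [DecidableEq β]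
    {g : β → ℕ} (hf : Function.Injective f) (hg : Function.Injective g)
    (p : ℕ → ℕ → Prop) [∀ i j, Decidable (p i j)] :
    (univ.filter fun q : α × β => p (rankIndex f q.1) (rankIndex g q.2)).card
      = ((range (Fintype.card α) ×ˢ range (Fintype.card β)).filter
          fun q => p q.1 q.2).card := by
  rw [← image_rankIndex hf, ← image_rankIndex hg, ← prodMap_image_product, univ_product_univ,
    filter_image, card_image_of_injective _ ((rankIndex_injective hf).prodMap
      (rankIndex_injective hg))]
  rfl

lemma card_rankIndex_Ico [DecidableEq α] (hf : Function.Injective f) (lo hi : ℕ) :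
    (univ.filter fun a => lo ≤ rankIndex f a ∧ rankIndex f a < hi).card
      = min hi (Fintype.card α) - lo := by
  rw [card_filter_rankIndex hf fun i => lo ≤ i ∧ i < hi, ← Nat.card_Ico]
  congr 1
  ext i
  simp only [mem_filter, mem_range, mem_Ico]
  omega

lemma topN_rankIndex_Ico [DecidableEq α] (hf : Function.Injective f) (N lo hi : ℕ) :
    topN f N (univ.filter fun a => lo ≤ rankIndex f a ∧ rankIndex f a < hi)
      = univ.filter fun a => lo ≤ rankIndex f a ∧ rankIndex f a < min (lo + N) hi := by
  ext a
  have hbelow : ((univ.filter fun b => lo ≤ rankIndex f b ∧ rankIndex f b < hi).filter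
      fun b => f b < f a).card = min (min hi (rankIndex f a)) (Fintype.card α) - lo := by
    rw [filter_filter, ← card_rankIndex_Ico hf]
    congr 1
    ext b
    simp only [mem_filter, mem_univ, true_and, ← rankIndex_lt_rankIndex_iff (f := f)]
    omega
  simp only [topN, mem_filter, mem_univ, true_and, hbelow]
  have := rankIndex_lt_card (f := f) a
  omega

lemma topN_zero {β : Type*} [DecidableEq β] (g : β → ℕ) (s : Finset β) :
    topN g 0 s = ∅ := by
  simp [topN]

lemma block_Ico_iff {k b c c' y : ℕ} (hc' : c' ≤ k) :
    b * k + c ≤ y ∧ y < b * k + c' ↔ y / k = b ∧ c ≤ y % k ∧ y % k < c' := by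
  have hy := Nat.div_add_mod' y k
  constructor
  · intro h
    have hb : y / k = b := (Nat.div_eq_iff (by omega)).2 (by omega)
    rw [hb] at hy
    omega
  · rintro ⟨rfl, h⟩
    omega

lemma topN_rankIndex_block {α : Type*} [Fintype α] [DecidableEq α] {f : α → ℕ}
    (hf : Function.Injective f) {k c' : ℕ} (hc' : c' ≤ k) (N b c : ℕ) :
    topN f N (univ.filter fun a =>
        rankIndex f a / k = b ∧ c ≤ rankIndex f a % k ∧ rankIndex f a % k < c')
      = univ.filter fun a =>
        rankIndex f a / k = b ∧ c ≤ rankIndex f a % k ∧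
          rankIndex f a % k < min (c + N) c' := by
  simp only [← block_Ico_iff hc', ← block_Ico_iff (le_trans (min_le_right _ _) hc'),
    topN_rankIndex_Ico hf]
  congr! 3
  omega

end RankIndex

structure CommonRanking {D H : Type*} (M : Market D H) (f : D → ℕ) (g : H → ℕ) : Prop where
  injective_doc : Function.Injective f
  injective_hosp : Function.Injective g
  rankHD_eq : ∀ h, M.rankHD h = f
  rankDH_eq : ∀ d, M.rankDH d = g
  accD : ∀ d h, M.accD d h
  accH : ∀ h d, M.accH h d

lemma CommonPrefs.commonRanking {D H : Type*} {M : Market D H} (hM : CommonPrefs M) (d₀ : D)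
    (h₀ : H) :
    CommonRanking M (M.rankHD h₀) (M.rankDH d₀) where
  injective_doc := hM.1.2 h₀
  injective_hosp := hM.1.1 d₀
  rankHD_eq h := hM.2.2.1 h h₀
  rankDH_eq d := hM.2.1 d d₀
  accD d h := (hM.2.2.2 d h).1
  accH h d := (hM.2.2.2 d h).2

section InterviewStep

variable {M : Market D H} {f : D → ℕ} {g : H → ℕ} {l k : ℕ}

/-- After `t` rounds, every doctor of the first `t` doctor blocks has rejected every hospital of a
later hospital block. -/
def interviewRej (f : D → ℕ) (g : H → ℕ) (l k t : ℕ) : Finset (H × D) :=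
  univ.filter fun p => rankIndex f p.2 / l < t ∧ rankIndex f p.2 / l < rankIndex g p.1 / k

lemma hProps_interviewRej (hc : CommonRanking M f g) (hl : 0 < l) (t : ℕ) (h : H) :
    hProps M (fun _ => l) (interviewRej f g l k t) h
      = univ.filter fun d => rankIndex f d / l = min (rankIndex g h / k) t := by
  have hprop : (univ.filter fun d => M.accH h d ∧ (h, d) ∉ interviewRej f g l k t)
      = univ.filter fun d => min (rankIndex g h / k) t * l ≤ rankIndex f d ∧
          rankIndex f d < Fintype.card D := by
    ext d
    simp only [interviewRej, mem_filter, mem_univ, true_and, hc.accH, rankIndex_lt_card,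
      and_true, ← Nat.le_div_iff_mul_le hl]
    omega
  rw [hProps, hc.rankHD_eq, hprop, topN_rankIndex_Ico hc.injective_doc]
  ext d
  simp only [mem_filter, mem_univ, true_and, Nat.div_eq_iff hl]
  have := rankIndex_lt_card (f := f) d
  omega

lemma dKeeps_interviewRej (hc : CommonRanking M f g) (hl : 0 < l) (hk : 0 < k) (t : ℕ)
    (d : D) :
    dKeeps M (fun _ => l) (fun _ => k) (interviewRej f g l k t) d
      = univ.filter fun h => rankIndex g h / k = rankIndex f d / l ∧ rankIndex f d / l ≤ t := by
  set b := rankIndex f d / l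
  have hprop : (univ.filter fun h =>
        M.accD d h ∧ d ∈ hProps M (fun _ => l) (interviewRej f g l k t) h)
      = univ.filter fun h => b * k ≤ rankIndex g h ∧
          rankIndex g h < if b < t then (b + 1) * k else if b = t then Fintype.card H else 0 := by
    ext h
    have := rankIndex_lt_card (f := g) h
    split_ifs <;> simp only [hProps_interviewRej hc hl, mem_filter, mem_univ, true_and, hc.accD,
      ← Nat.le_div_iff_mul_le hk, ← Nat.div_lt_iff_lt_mul hk] <;> omega
  have hrank : (fun h => M.rankDH d h) = g := hc.rankDH_eq d
  rw [dKeeps, hrank, hprop, topN_rankIndex_Ico hc.injective_hosp]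
  ext h
  have := rankIndex_lt_card (f := g) h
  split_ifs <;> simp only [mem_filter, mem_univ, true_and, Nat.div_eq_iff hk, add_one_mul] <;>
    omega

lemma iStep_interviewRej (hc : CommonRanking M f g) (hl : 0 < l) (hk : 0 < k) (t : ℕ) :
    iStep M (fun _ => l) (fun _ => k) (interviewRej f g l k t) = interviewRej f g l k (t + 1) := by
  ext ⟨h, d⟩
  simp only [iStep, mem_union, mem_filter, mem_univ, true_and, hProps_interviewRej hc hl,
    dKeeps_interviewRej hc hl hk]
  simp only [interviewRej, mem_filter, mem_univ, true_and]
  omega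

lemma iRej_eq_s16 (hc : CommonRanking M f g) (hl : 0 < l) (hk : 0 < k) :
    iRej M (fun _ => l) (fun _ => k) = interviewRej f g l k (Fintype.card D * Fintype.card H) := by
  suffices ∀ t, (iStep M (fun _ => l) (fun _ => k))^[t] ∅ = interviewRej f g l k t from this _
  intro t
  induction t with
  | zero => ext; simp [interviewRej]
  | succ t ih => rw [Function.iterate_succ_apply', ih, iStep_interviewRej hc hl hk]

lemma interviews_eq_s16 (hc : CommonRanking M f g) (hl : 0 < l) (hk : 0 < k) :
    interviews M (fun _ => l) (fun _ => k)
      = univ.filter fun p => rankIndex g p.1 / k = rankIndex f p.2 / l := by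
  ext ⟨h, d⟩
  simp only [interviews, iRej_eq_s16 hc hl hk, mem_filter, mem_univ, true_and,
    hProps_interviewRej hc hl, dKeeps_interviewRej hc hl hk]
  have : rankIndex f d / l < Fintype.card D * Fintype.card H :=
    (Nat.div_le_self _ _).trans_lt <| (rankIndex_lt_card d).trans_le <|
      Nat.le_mul_of_pos_right _ (Fintype.card_pos_iff.2 ⟨h⟩)
  omega

end InterviewStep

section MatchingStep

variable {M : Market D H} {f : D → ℕ} {g : H → ℕ} {l k : ℕ}

/-- After `t` rounds, the doctor in position `r` of a block has been rejected by the first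
`min r t` hospitals of the corresponding hospital block. -/
def matchRej (f : D → ℕ) (g : H → ℕ) (l k t : ℕ) : Finset (D × H) :=
  univ.filter fun p => rankIndex g p.2 / k = rankIndex f p.1 / l ∧
    rankIndex g p.2 % k < min (rankIndex f p.1 % l) t

lemma dProps_matchRej (hc : CommonRanking M f g) (hk : 0 < k) (t : ℕ) (d : D) :
    dProps M (univ.filter fun p => rankIndex g p.1 / k = rankIndex f p.2 / l)
        (matchRej f g l k t) d
      = univ.filter fun h => rankIndex g h / k = rankIndex f d / l ∧
          rankIndex g h % k = min (rankIndex f d % l) t := by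
  have hprop : (univ.filter fun h => (h, d) ∈ (univ.filter fun p : H × D =>
        rankIndex g p.1 / k = rankIndex f p.2 / l) ∧ (d, h) ∉ matchRej f g l k t)
      = univ.filter fun h => rankIndex g h / k = rankIndex f d / l ∧
          min (rankIndex f d % l) t ≤ rankIndex g h % k ∧ rankIndex g h % k < k := by
    ext h
    simp only [matchRej, mem_filter, mem_univ, true_and, Nat.mod_lt _ hk, and_true]
    omega
  rw [dProps, hc.rankDH_eq, hprop, topN_rankIndex_block hc.injective_hosp le_rfl]
  ext h
  simp only [mem_filter, mem_univ, true_and]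
  have := Nat.mod_lt (rankIndex g h) hk
  omega

lemma hKeeps_matchRej (hc : CommonRanking M f g) (hl : 0 < l) (hk : 0 < k) (t : ℕ) (h : H) :
    hKeeps M (univ.filter fun p => rankIndex g p.1 / k = rankIndex f p.2 / l)
        (matchRej f g l k t) h
      = univ.filter fun d => rankIndex f d / l = rankIndex g h / k ∧
          rankIndex f d % l = rankIndex g h % k ∧ rankIndex g h % k ≤ t := by
  obtain ⟨hi, hhi⟩ : ∃ hi, hi = if rankIndex g h % k < t then min (rankIndex g h % k + 1) l
      else if rankIndex g h % k = t then l else 0 := ⟨_, rfl⟩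
  have hil : hi ≤ l := by split_ifs at hhi <;> omega
  have hprop : (univ.filter fun d => h ∈ dProps M (univ.filter fun p : H × D =>
        rankIndex g p.1 / k = rankIndex f p.2 / l) (matchRej f g l k t) d)
      = univ.filter fun d => rankIndex f d / l = rankIndex g h / k ∧
          rankIndex g h % k ≤ rankIndex f d % l ∧ rankIndex f d % l < hi := by
    ext d
    simp only [dProps_matchRej hc hk, mem_filter, mem_univ, true_and]
    have := Nat.mod_lt (rankIndex f d) hl
    split_ifs at hhi <;> omega
  rw [hKeeps, hc.rankHD_eq, hprop, topN_rankIndex_block hc.injective_doc hil]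
  ext d
  simp only [mem_filter, mem_univ, true_and, lt_min_iff]
  have := Nat.mod_lt (rankIndex f d) hl
  split_ifs at hhi <;> omega

lemma mStep_matchRej (hc : CommonRanking M f g) (hl : 0 < l) (hk : 0 < k) (t : ℕ) :
    mStep M (univ.filter fun p => rankIndex g p.1 / k = rankIndex f p.2 / l) (matchRej f g l k t)
      = matchRej f g l k (t + 1) := by
  ext ⟨d, h⟩
  simp only [mStep, mem_union, mem_filter, mem_univ, true_and, dProps_matchRej hc hk,
    hKeeps_matchRej hc hl hk]
  simp only [matchRej, mem_filter, mem_univ, true_and]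
  omega

lemma mRej_eq_s16 (hc : CommonRanking M f g) (hl : 0 < l) (hk : 0 < k) :
    mRej M (univ.filter fun p => rankIndex g p.1 / k = rankIndex f p.2 / l)
      = matchRej f g l k (Fintype.card D * Fintype.card H) := by
  suffices ∀ t, (mStep M (univ.filter fun p => rankIndex g p.1 / k = rankIndex f p.2 / l))^[t] ∅
      = matchRej f g l k t from this _
  intro t
  induction t with
  | zero => ext; simp [matchRej]
  | succ t ih => rw [Function.iterate_succ_apply', ih, mStep_matchRej hc hl hk]

def BlockMatch (l k x y : ℕ) : Prop := x / l = y / k ∧ x % l = y % k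

instance (l k x y : ℕ) : Decidable (BlockMatch l k x y) := inferInstanceAs (Decidable (_ ∧ _))

lemma ikMatching_eq (hc : CommonRanking M f g) (hl : 0 < l) (hk : 0 < k) :
    ikMatching M (fun _ => l) (fun _ => k)
      = univ.filter fun p : D × H => BlockMatch l k (rankIndex f p.1) (rankIndex g p.2) := by
  ext ⟨d, h⟩
  simp only [ikMatching, finalMatch, interviews_eq_s16 hc hl hk, mRej_eq_s16 hc hl hk, mem_filter,
    mem_univ, true_and, dProps_matchRej hc hk, hKeeps_matchRej hc hl hk]
  unfold BlockMatch
  have : rankIndex f d % l < Fintype.card D * Fintype.card H :=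
    (Nat.mod_le _ _).trans_lt <| (rankIndex_lt_card d).trans_le <|
      Nat.le_mul_of_pos_right _ (Fintype.card_pos_iff.2 ⟨h⟩)
  omega

end MatchingStep

section Degenerate

variable (M : Market D H)

lemma finalMatch_empty : finalMatch M ∅ = ∅ := by
  ext p
  simp [finalMatch, dProps, topN]

lemma ikMatching_zero_left (κ : D → ℕ) : ikMatching M (fun _ => 0) κ = ∅ := by
  have : interviews M (fun _ => 0) κ = ∅ := by
    ext p
    simp [interviews, hProps, topN_zero]
  rw [ikMatching, this, finalMatch_empty]

lemma ikMatching_zero_right (ι : H → ℕ) : ikMatching M ι (fun _ => 0) = ∅ := by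
  have : interviews M ι (fun _ => 0) = ∅ := by
    ext p
    simp [interviews, dKeeps, topN_zero]
  rw [ikMatching, this, finalMatch_empty]

lemma blockingCount_le_blockingCount_empty {M : Market D H}
    (hacc : ∀ d h, M.accD d h ∧ M.accH h d) (μ : Finset (D × H)) :
    blockingCount M μ ≤ blockingCount M ∅ := by
  refine card_le_card fun p _ => mem_filter.2 ⟨mem_univ _, ?_⟩
  simp [Blocks, hacc]

end Degenerate

section PairCount

def IdxBlocks (N P : ℕ) (R : ℕ → ℕ → Prop) (x y : ℕ) : Prop :=
  ¬ R x y ∧ (∀ y' < P, R x y' → y < y') ∧ (∀ x' < N, R x' y → x < x')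

instance {N P : ℕ} {R : ℕ → ℕ → Prop} [∀ x y, Decidable (R x y)] (x y : ℕ) :
    Decidable (IdxBlocks N P R x y) :=
  inferInstanceAs (Decidable (_ ∧ _))

lemma idxBlocks_swap {N P : ℕ} {R S : ℕ → ℕ → Prop} (hRS : ∀ x y, R x y ↔ S y x)
    (x y : ℕ) :
    IdxBlocks N P R x y ↔ IdxBlocks P N S y x := by
  simp only [IdxBlocks, hRS]
  tauto

open Classical in
noncomputable def pairCount (N P : ℕ) (p : ℕ → ℕ → Prop) : ℕ :=
  ((range N ×ˢ range P).filter fun q => p q.1 q.2).card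

lemma pairCount_eq_card_filter (N P : ℕ) (p : ℕ → ℕ → Prop) [∀ x y, Decidable (p x y)] :
    pairCount N P p = ((range N ×ˢ range P).filter fun q => p q.1 q.2).card := by
  rw [pairCount]
  congr!

lemma pairCount_swap {N P : ℕ} {p q : ℕ → ℕ → Prop} (hpq : ∀ x y, p x y ↔ q y x) :
    pairCount N P p = pairCount P N q := by
  classical
  rw [pairCount, pairCount, ← image_swap_product, filter_image,
    card_image_of_injective _ Prod.swap_injective]
  simp only [Prod.fst_swap, Prod.snd_swap, hpq]

lemma pairCount_eq_sum (N P : ℕ) (p : ℕ → ℕ → Prop) [∀ x y, Decidable (p x y)] :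
    pairCount N P p = ∑ x ∈ range N, ((range P).filter (p x)).card := by
  rw [pairCount_eq_card_filter, card_filter, sum_product]
  simp only [card_filter]

end PairCount

section Graph

variable {N P : ℕ} {ψ ψ' : ℕ → ℕ}

lemma pairCount_graph :
    pairCount N P (fun x y => y = ψ x) = ((range N).filter (ψ · < P)).card := by
  rw [card_filter (ψ · < P), pairCount_eq_sum]
  refine sum_congr rfl fun x _ => ?_
  split_ifs with hx
  · rw [card_eq_one]
    exact ⟨ψ x, by ext y; simp only [mem_filter, mem_range, mem_singleton]; omega⟩
  · rw [card_eq_zero]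
    ext y
    simp only [mem_filter, mem_range, notMem_empty, iff_false]
    omega

lemma filter_range_idxBlocks_graph {x : ℕ} (hx : x < N) :
    (range P).filter (IdxBlocks N P (fun x y => y = ψ x) x)
      = range (min (ψ x) P) \ ((range x).filter (ψ · < P)).image ψ := by
  ext y
  simp only [IdxBlocks, mem_filter, mem_range, mem_sdiff, mem_image, lt_min_iff, not_exists,
    not_and]
  constructor
  · rintro ⟨hy, hne, hlt, hgt⟩
    have hyx : y < ψ x := by
      by_contra! hle
      exact absurd (hlt _ (by omega) rfl) (by omega)
    refine ⟨⟨hyx, hy⟩, fun x' hx' hxy => ?_⟩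
    exact (hgt x' (by omega) hxy.symm).not_gt hx'.1
  · rintro ⟨⟨hyx, hy⟩, hnot⟩
    refine ⟨hy, hyx.ne, fun _ _ hy' => hy' ▸ hyx, fun x' _ hxy => ?_⟩
    by_contra! hle
    rcases hle.lt_or_eq with hlt | rfl
    · exact hnot x' ⟨hlt, hxy ▸ hy⟩ hxy.symm
    · exact hyx.ne hxy

lemma pairCount_idxBlocks_graph (hψ : StrictMono ψ) :
    pairCount N P (IdxBlocks N P fun x y => y = ψ x)
      = ∑ x ∈ range N, (min (ψ x) P - ((range x).filter (ψ · < P)).card) := by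
  rw [pairCount_eq_sum]
  refine sum_congr rfl fun x hx => ?_
  have hsub : ((range x).filter (ψ · < P)).image ψ ⊆ range (min (ψ x) P) := by
    intro y hy
    obtain ⟨x', hx', rfl⟩ := mem_image.1 hy
    simp only [mem_filter, mem_range] at hx' ⊢
    exact lt_min (hψ hx'.1) hx'.2
  rw [filter_range_idxBlocks_graph (mem_range.1 hx), card_sdiff_of_subset hsub, card_range,
    card_image_of_injective _ hψ.injective]

lemma pairCount_graph_anti (hψ : ∀ x, ψ x ≤ ψ' x) :
    pairCount N P (fun x y => y = ψ' x) ≤ pairCount N P (fun x y => y = ψ x) := by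
  rw [pairCount_graph, pairCount_graph]
  exact card_le_card (monotone_filter_right _ fun x _ hx => (hψ x).trans_lt hx)

lemma pairCount_idxBlocks_graph_mono (hψ : StrictMono ψ) (hψ' : StrictMono ψ')
    (hle : ∀ x, ψ x ≤ ψ' x) :
    pairCount N P (IdxBlocks N P fun x y => y = ψ x)
      ≤ pairCount N P (IdxBlocks N P fun x y => y = ψ' x) := by
  rw [pairCount_idxBlocks_graph hψ, pairCount_idxBlocks_graph hψ']
  refine sum_le_sum fun x _ => tsub_le_tsub (min_le_min_right _ (hle x)) (card_le_card ?_)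
  exact monotone_filter_right _ fun x _ hx => (hle x).trans_lt hx

end Graph

section BlockShift

/-- For `a ≤ b` this is `x / a * b + x % a`: the same position in the same block, on a side whose
blocks have length `b`. -/
def blockShift (a b x : ℕ) : ℕ := x + x / a * (b - a)

lemma blockShift_strictMono (a b : ℕ) : StrictMono (blockShift a b) :=
  strictMono_id.add_monotone fun _ _ h => Nat.mul_le_mul_right _ (Nat.div_le_div_right h)

lemma blockShift_le_blockShift {a b a' b' : ℕ} (ha' : 0 < a') (ha : a' ≤ a) (hb : b ≤ b')
    (x : ℕ) : blockShift a b x ≤ blockShift a' b' x :=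
  Nat.add_le_add_left (Nat.mul_le_mul (Nat.div_le_div_left ha ha') (by omega)) x

lemma blockMatch_iff {a b : ℕ} (ha : 0 < a) (hab : a ≤ b) (x y : ℕ) :
    BlockMatch a b x y ↔ y = blockShift a b x := by
  obtain ⟨c, rfl⟩ := Nat.exists_eq_add_of_le hab
  have hshift : blockShift a (a + c) x = x % a + (a + c) * (x / a) := by
    rw [blockShift, Nat.add_sub_cancel_left]
    linarith [Nat.mod_add_div x a]
  rw [BlockMatch, hshift, eq_comm (a := x / a), eq_comm (a := x % a),
    Nat.div_mod_unique (by omega), eq_comm]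
  have := Nat.mod_lt x ha
  omega

lemma blockMatch_comm {a b x y : ℕ} : BlockMatch a b x y ↔ BlockMatch b a y x :=
  and_congr eq_comm eq_comm

lemma pairCount_blockMatch_comm {N P : ℕ} (a b : ℕ) :
    pairCount N P (BlockMatch a b) = pairCount P N (BlockMatch b a) :=
  pairCount_swap fun _ _ => blockMatch_comm

lemma pairCount_idxBlocks_blockMatch_comm {N P : ℕ} (a b : ℕ) :
    pairCount N P (IdxBlocks N P (BlockMatch a b))
      = pairCount P N (IdxBlocks P N (BlockMatch b a)) :=
  pairCount_swap (idxBlocks_swap fun _ _ => blockMatch_comm)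

lemma pairCount_blockMatch_mono {N P a b a' b' : ℕ} (ha' : 0 < a') (ha : a' ≤ a) (hab : a ≤ b)
    (hb : b ≤ b') :
    pairCount N P (IdxBlocks N P (BlockMatch a b))
        ≤ pairCount N P (IdxBlocks N P (BlockMatch a' b')) ∧
      pairCount N P (BlockMatch a' b') ≤ pairCount N P (BlockMatch a b) := by
  have hgraph : ∀ {a b}, 0 < a → a ≤ b → BlockMatch a b = fun x y => y = blockShift a b x :=
    fun ha hab => funext₂ fun x y => propext (blockMatch_iff ha hab x y)
  rw [hgraph (ha'.trans_le ha) hab, hgraph ha' (by omega)]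
  exact ⟨pairCount_idxBlocks_graph_mono (blockShift_strictMono _ _) (blockShift_strictMono _ _)
      (blockShift_le_blockShift ha' ha hb),
    pairCount_graph_anti (blockShift_le_blockShift ha' ha hb)⟩

end BlockShift

section Counting

variable {M : Market D H} {f : D → ℕ} {g : H → ℕ} {l k : ℕ}

lemma blocks_filter_rankIndex_iff (hc : CommonRanking M f g) (R : ℕ → ℕ → Prop)
    [∀ x y, Decidable (R x y)] (d : D) (h : H) :
    Blocks M (univ.filter fun p : D × H => R (rankIndex f p.1) (rankIndex g p.2)) d h ↔
      IdxBlocks (Fintype.card D) (Fintype.card H) R (rankIndex f d) (rankIndex g h) := by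
  simp only [Blocks, IdxBlocks, mem_filter, mem_univ, true_and, hc.accD, hc.accH, hc.rankDH_eq,
    hc.rankHD_eq, ← rankIndex_lt_rankIndex_iff (f := g), ← rankIndex_lt_rankIndex_iff (f := f)]
  exact and_congr_right' <| and_congr
    (forall_rankIndex_iff hc.injective_hosp (q := fun y' => R _ y' → rankIndex g h < y'))
    (forall_rankIndex_iff hc.injective_doc (q := fun x' => R x' _ → rankIndex f d < x'))

lemma card_ikMatching (hc : CommonRanking M f g) (hl : 0 < l) (hk : 0 < k) :
    (ikMatching M (fun _ => l) (fun _ => k)).card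
      = pairCount (Fintype.card D) (Fintype.card H) (BlockMatch l k) := by
  rw [ikMatching_eq hc hl hk, card_filter_rankIndex_prod hc.injective_doc hc.injective_hosp,
    pairCount_eq_card_filter]

lemma blockingCount_ikMatching (hc : CommonRanking M f g) (hl : 0 < l) (hk : 0 < k) :
    blockingCount M (ikMatching M (fun _ => l) (fun _ => k))
      = pairCount (Fintype.card D) (Fintype.card H)
          (IdxBlocks (Fintype.card D) (Fintype.card H) (BlockMatch l k)) := by
  rw [ikMatching_eq hc hl hk, blockingCount,
    filter_congr fun p _ => blocks_filter_rankIndex_iff hc (BlockMatch l k) p.1 p.2,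
    card_filter_rankIndex_prod hc.injective_doc hc.injective_hosp, pairCount_eq_card_filter]

end Counting

section CapacityComparison

variable {M : Market D H} {f : D → ℕ} {g : H → ℕ} {l k k' : ℕ}

lemma blockingCount_le_and_card_le_of_lt_of_le (hc : CommonRanking M f g) (hk'k : k' < k)
    (hkl : k ≤ l) :
    blockingCount M (ikMatching M (fun _ => l) (fun _ => k)) ≤
        blockingCount M (ikMatching M (fun _ => l) (fun _ => k')) ∧
      (ikMatching M (fun _ => l) (fun _ => k')).card ≤
        (ikMatching M (fun _ => l) (fun _ => k)).card := by
  rcases Nat.eq_zero_or_pos k' with rfl | hk'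
  · rw [ikMatching_zero_right]
    exact ⟨blockingCount_le_blockingCount_empty (fun d h => ⟨hc.accD d h, hc.accH h d⟩) _,
      by simp⟩
  have hk := hk'.trans hk'k
  have hl := hk.trans_le hkl
  rw [blockingCount_ikMatching hc hl hk, blockingCount_ikMatching hc hl hk',
    card_ikMatching hc hl hk, card_ikMatching hc hl hk', pairCount_idxBlocks_blockMatch_comm l k,
    pairCount_idxBlocks_blockMatch_comm l k', pairCount_blockMatch_comm l k,
    pairCount_blockMatch_comm l k']
  exact pairCount_blockMatch_mono hk' hk'k.le hkl le_rfl

lemma blockingCount_le_and_card_le_of_le_of_lt (hc : CommonRanking M f g) (hlk : l ≤ k)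
    (hkk' : k < k') :
    blockingCount M (ikMatching M (fun _ => l) (fun _ => k)) ≤
        blockingCount M (ikMatching M (fun _ => l) (fun _ => k')) ∧
      (ikMatching M (fun _ => l) (fun _ => k')).card ≤
        (ikMatching M (fun _ => l) (fun _ => k)).card := by
  rcases Nat.eq_zero_or_pos l with rfl | hl
  · simp only [ikMatching_zero_left, le_refl, and_self]
  have hk := hl.trans_le hlk
  rw [blockingCount_ikMatching hc hl hk, blockingCount_ikMatching hc hl (hk.trans hkk'),
    card_ikMatching hc hl hk, card_ikMatching hc hl (hk.trans hkk')]
  exact pairCount_blockMatch_mono hl le_rfl hlk hkk'.le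

end CapacityComparison

/-- Fix hospitals' interview capacity at `l`, common preferences. If
`k' < k ≤ l` or `l ≤ k < k'`, then the `(l,k')`-matching has at least as many
blocking pairs and a weakly lower match rate than the `(l,k)`-matching. -/
theorem target_interview_cap
    (M : Market D H) (hM : CommonPrefs M) (l k k' : ℕ)
    (hcase : (k' < k ∧ k ≤ l) ∨ (l ≤ k ∧ k < k')) :
    blockingCount M (ikMatching M (fun _ => l) (fun _ => k)) ≤
      blockingCount M (ikMatching M (fun _ => l) (fun _ => k')) ∧
    ((ikMatching M (fun _ => l) (fun _ => k')).card : ℚ) /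
        (min (Fintype.card D) (Fintype.card H)) ≤
      ((ikMatching M (fun _ => l) (fun _ => k)).card : ℚ) /
        (min (Fintype.card D) (Fintype.card H)) := by
  rcases isEmpty_or_nonempty (D × H) with hempty | ⟨d₀, h₀⟩
  · simp [blockingCount, eq_empty_of_isEmpty]
  have hc := hM.commonRanking d₀ h₀
  have key := hcase.elim (fun h => blockingCount_le_and_card_le_of_lt_of_le hc h.1 h.2)
    fun h => blockingCount_le_and_card_le_of_le_of_lt hc h.1 h.2
  exact ⟨key.1, div_le_div_of_nonneg_right (by exact_mod_cast key.2) (by positivity)⟩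
end

section
/- Suppose (ι,κ) is adequate at P with final matching μ, and doctors' capacities increase to κ' ≥ κ with final matching μ'. If a doctor d is rejected by hospital h in round t of the doctor-proposing deferred acceptance in the matching step under κ, then under κ' either d no longer interviews with h, or d is rejected by h in round t or earlier; consequently μ'(d) ≠ h for any h that rejected d under κ. -/
/- Formal model of the two-step interview-then-match process of
Echenique-et-al-style markets: Step 1 computes the interview matching by
hospital-proposing deferred acceptance (with responsive, capacity-constrained
choice functions); Step 2 computes the final one-to-one matching by
doctor-proposing deferred acceptance on preferences restricted to interview
partners. -/

open Finset

variable {D H : Type*} [Fintype D] [Fintype H] [DecidableEq D] [DecidableEq H]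

namespace RBRA
set_option linter.unusedSectionVars false
open Finset
variable {D H : Type*} [Fintype D] [Fintype H] [DecidableEq D] [DecidableEq H]

lemma mem_topN {α : Type*} [DecidableEq α] {rank : α → ℕ} {n : ℕ} {s : Finset α} {x : α} :
    x ∈ topN rank n s ↔ x ∈ s ∧ (s.filter fun y => rank y < rank x).card < n :=
  Finset.mem_filter

lemma filter_lt_subset {α : Type*} [DecidableEq α] {rank : α → ℕ} {s t : Finset α} {x y : α}
    (hst : s ⊆ t) (hxy : rank x ≤ rank y) :
    (s.filter fun z => rank z < rank x) ⊆ (t.filter fun z => rank z < rank y) := by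
  intro z hz
  rw [Finset.mem_filter] at hz ⊢
  exact ⟨hst hz.1, lt_of_lt_of_le hz.2 hxy⟩

lemma topN_anti {α : Type*} [DecidableEq α] {rank : α → ℕ} {n : ℕ} {s t : Finset α} {x : α}
    (hst : s ⊆ t) (hx : x ∈ s) (hxt : x ∈ topN rank n t) : x ∈ topN rank n s :=
  mem_topN.2 ⟨hx, lt_of_le_of_lt (card_le_card (filter_lt_subset hst le_rfl)) (mem_topN.1 hxt).2⟩

lemma topN_of_le {α : Type*} [DecidableEq α] {rank : α → ℕ} {n : ℕ} {s : Finset α} {x y : α}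
    (hy : y ∈ topN rank n s) (hx : x ∈ s) (hle : rank x ≤ rank y) : x ∈ topN rank n s :=
  mem_topN.2 ⟨hx, lt_of_le_of_lt (card_le_card (filter_lt_subset (Finset.Subset.refl s) hle))
    (mem_topN.1 hy).2⟩

variable {M : Market D H} {ι : H → ℕ} {κ : D → ℕ}

lemma hProps_pool {R : Finset (H × D)} {h : H} {d : D} (hd : d ∈ hProps M ι R h) :
    M.accH h d ∧ (h, d) ∉ R := by
  have := (mem_topN.1 hd).1
  simpa using this

lemma hProps_mono {R R' : Finset (H × D)} {h : H} {d : D} (hRR : R ⊆ R')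
    (hd : d ∈ hProps M ι R h) (hnot : (h, d) ∉ R') : d ∈ hProps M ι R' h := by
  refine topN_anti ?_ ?_ hd
  · intro x hx
    rw [Finset.mem_filter] at hx ⊢
    exact ⟨hx.1, hx.2.1, fun hc => hx.2.2 (hRR hc)⟩
  · simp [ (hProps_pool hd).1, hnot]

lemma hProps_of_le {R : Finset (H × D)} {h : H} {d d' : D}
    (hd : d ∈ hProps M ι R h) (hacc : M.accH h d') (hnR : (h, d') ∉ R)
    (hle : M.rankHD h d' ≤ M.rankHD h d) : d' ∈ hProps M ι R h :=
  topN_of_le hd (by simp [hacc, hnR]) hle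

/-- base set of `dKeeps`. -/
def Pset (M : Market D H) (ι : H → ℕ) (R : Finset (H × D)) (d : D) : Finset H :=
  univ.filter fun y => M.accD d y ∧ d ∈ hProps M ι R y

/-- number of acceptable current proposers to `d` strictly better than `h`. -/
def cnt (M : Market D H) (ι : H → ℕ) (R : Finset (H × D)) (d : D) (h : H) : ℕ :=
  ((Pset M ι R d).filter fun y => M.rankDH d y < M.rankDH d h).card

lemma mem_dKeeps {R : Finset (H × D)} {d : D} {h : H} :
    h ∈ dKeeps M ι κ R d ↔
      M.accD d h ∧ d ∈ hProps M ι R h ∧ cnt M ι R d h < κ d := by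
  rw [dKeeps, mem_topN]
  simp only [Finset.mem_filter, Finset.mem_univ, true_and]
  constructor
  · rintro ⟨⟨h1, h2⟩, h3⟩; exact ⟨h1, h2, h3⟩
  · rintro ⟨h1, h2, h3⟩; exact ⟨⟨h1, h2⟩, h3⟩

lemma cnt_mono_rank {R : Finset (H × D)} {d : D} {g h : H}
    (hle : M.rankDH d g ≤ M.rankDH d h) : cnt M ι R d g ≤ cnt M ι R d h :=
  card_le_card (filter_lt_subset (Finset.Subset.refl _) hle)

lemma mem_iStep {R : Finset (H × D)} {h : H} {d : D} :
    (h, d) ∈ iStep M ι κ R ↔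
      (h, d) ∈ R ∨ (d ∈ hProps M ι R h ∧ h ∉ dKeeps M ι κ R d) := by
  simp [iStep]

lemma subset_iStep {R : Finset (H × D)} : R ⊆ iStep M ι κ R :=
  fun _ hx => Finset.mem_union_left _ hx

end RBRA
namespace RBRA
open Finset
variable {D H : Type*} [Fintype D] [Fintype H] [DecidableEq D] [DecidableEq H]
variable {M : Market D H} {ι : H → ℕ} {κ κ' : D → ℕ}

/-- Key invariant (L5): if `d` has rejected an acceptable `g` by stage `s` of the
interview step, then `d` currently has at least `κ d` acceptable proposers better
than `g`. -/
lemma L5 (M : Market D H) (ι : H → ℕ) (κ : D → ℕ) :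
    ∀ (s : ℕ) (d : D) (g : H), M.accD d g →
      (g, d) ∈ (iStep M ι κ)^[s] (∅ : Finset (H × D)) →
      κ d ≤ cnt M ι ((iStep M ι κ)^[s] (∅ : Finset (H × D))) d g := by
  intro s
  induction s with
  | zero => simp
  | succ s ihs =>
    intro d
    suffices key : ∀ (r : ℕ) (g : H), M.rankDH d g ≤ r → M.accD d g →
        (g, d) ∈ (iStep M ι κ)^[s+1] (∅ : Finset (H × D)) →
        κ d ≤ cnt M ι ((iStep M ι κ)^[s+1] (∅ : Finset (H × D))) d g by
      intro g; exact key (M.rankDH d g) g le_rfl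
    intro r
    induction r using Nat.strong_induction_on with
    | _ r ih =>
      intro g hr hacc hmem
      set R : Finset (H × D) := (iStep M ι κ)^[s] ∅ with hR
      have hRsub : R ⊆ (iStep M ι κ)^[s+1] ∅ := by
        rw [Function.iterate_succ_apply']; exact subset_iStep
      -- in all cases, κ d ≤ cnt at stage s
      have hbase : κ d ≤ cnt M ι R d g := by
        rw [Function.iterate_succ_apply'] at hmem
        rcases mem_iStep.1 hmem with hold | ⟨hprop, hkeep⟩
        · exact ihs d g hacc hold
        · by_contra hc
          exact hkeep (mem_dKeeps.2 ⟨hacc, hprop, Nat.lt_of_not_le hc⟩)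
      by_cases hex : ∃ y ∈ (Pset M ι R d).filter
          (fun y => M.rankDH d y < M.rankDH d g), (y, d) ∈ (iStep M ι κ)^[s+1] ∅
      · obtain ⟨y, hyP, hyR⟩ := hex
        rw [Finset.mem_filter] at hyP
        obtain ⟨hyPs, hylt⟩ := hyP
        rw [Pset, Finset.mem_filter] at hyPs
        have haccy : M.accD d y := hyPs.2.1
        have hkey := ih (M.rankDH d y) (lt_of_lt_of_le hylt hr) y le_rfl haccy hyR
        exact le_trans hkey (cnt_mono_rank (le_of_lt hylt))
      · push_neg at hex
        refine le_trans hbase (card_le_card ?_)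
        intro y hy
        have hyn := hex y hy
        rw [Finset.mem_filter] at hy ⊢
        refine ⟨?_, hy.2⟩
        rw [Pset, Finset.mem_filter] at hy ⊢
        exact ⟨hy.1.1, hy.1.2.1, hProps_mono hRsub hy.1.2.2 hyn⟩

/-- Rejection sets shrink (round by round) when doctors' capacities increase. -/
lemma claimA (M : Market D H) (ι : H → ℕ) {κ κ' : D → ℕ} (hκ : ∀ d, κ d ≤ κ' d) :
    ∀ s : ℕ, (iStep M ι κ')^[s] (∅ : Finset (H × D)) ⊆ (iStep M ι κ)^[s] ∅ := by
  intro s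
  induction s with
  | zero => simp
  | succ s ih =>
    rw [Function.iterate_succ_apply', Function.iterate_succ_apply']
    rintro ⟨h, d⟩ hp
    set R : Finset (H × D) := (iStep M ι κ)^[s] ∅ with hRdef
    set R' : Finset (H × D) := (iStep M ι κ')^[s] ∅ with hR'def
    rcases mem_iStep.1 hp with hold | ⟨hprop', hkeep'⟩
    · exact subset_iStep (ih hold)
    · by_cases hR : (h, d) ∈ R
      · exact subset_iStep hR
      · have hprop : d ∈ hProps M ι R h := hProps_mono ih hprop' hR
        refine mem_iStep.2 (Or.inr ⟨hprop, ?_⟩)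
        intro hk
        rw [mem_dKeeps] at hk
        obtain ⟨hacc, _, hcnt⟩ := hk
        have hge : κ' d ≤ cnt M ι R' d h := by
          by_contra hc
          exact hkeep' (mem_dKeeps.2 ⟨hacc, hprop', Nat.lt_of_not_le hc⟩)
        by_cases hex : ∃ y ∈ (Pset M ι R' d).filter
            (fun y => M.rankDH d y < M.rankDH d h), (y, d) ∈ R
        · obtain ⟨y, hyP, hyR⟩ := hex
          rw [Finset.mem_filter] at hyP
          have haccy : M.accD d y := by
            have := hyP.1; rw [Pset, Finset.mem_filter] at this; exact this.2.1
          have := le_trans (L5 M ι κ s d y haccy hyR) (cnt_mono_rank (le_of_lt hyP.2))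
          exact absurd hcnt (not_lt.2 this)
        · push_neg at hex
          have hsub : (Pset M ι R' d).filter (fun y => M.rankDH d y < M.rankDH d h) ⊆
              (Pset M ι R d).filter (fun y => M.rankDH d y < M.rankDH d h) := by
            intro y hy
            have hyn := hex y hy
            rw [Finset.mem_filter] at hy ⊢
            refine ⟨?_, hy.2⟩
            rw [Pset, Finset.mem_filter] at hy ⊢
            exact ⟨hy.1.1, hy.1.2.1, hProps_mono ih hy.1.2.2 hyn⟩
          have : κ d ≤ cnt M ι R d h :=
            le_trans (hκ d) (le_trans hge (card_le_card hsub))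
          exact absurd hcnt (not_lt.2 this)

lemma mem_interviews {h : H} {d : D} :
    (h, d) ∈ interviews M ι κ ↔
      d ∈ hProps M ι (iRej M ι κ) h ∧ h ∈ dKeeps M ι κ (iRej M ι κ) d := by
  simp [interviews]

lemma iRej_eq : iRej M ι κ = (iStep M ι κ)^[Fintype.card D * Fintype.card H] ∅ := rfl

/-- No doctor gains a new interview (weakly) better than a retained one. -/
lemma N1 (M : Market D H) (ι : H → ℕ) {κ κ' : D → ℕ} (hκ : ∀ d, κ d ≤ κ' d)
    {d : D} {g h : H} (hg' : (g, d) ∈ interviews M ι κ') (hg : (g, d) ∉ interviews M ι κ)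
    (hh : (h, d) ∈ interviews M ι κ) : ¬ M.rankDH d g < M.rankDH d h := by
  intro hlt
  have hRR : iRej M ι κ' ⊆ iRej M ι κ := by
    rw [iRej_eq, iRej_eq]; exact claimA M ι hκ _
  obtain ⟨hp', hk'⟩ := mem_interviews.1 hg'
  obtain ⟨hph, hkh⟩ := mem_interviews.1 hh
  have haccg : M.accD d g := (mem_dKeeps.1 hk').1
  have hcnth : cnt M ι (iRej M ι κ) d h < κ d := (mem_dKeeps.1 hkh).2.2
  by_cases hRmem : (g, d) ∈ iRej M ι κ
  · have h5 : κ d ≤ cnt M ι (iRej M ι κ) d g := by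
      rw [iRej_eq] at hRmem ⊢
      exact L5 M ι κ _ d g haccg hRmem
    exact absurd hcnth (not_lt.2 (le_trans h5 (cnt_mono_rank (le_of_lt hlt))))
  · have hpg : d ∈ hProps M ι (iRej M ι κ) g := hProps_mono hRR hp' hRmem
    have hng : g ∉ dKeeps M ι κ (iRej M ι κ) d :=
      fun hk => hg (mem_interviews.2 ⟨hpg, hk⟩)
    have : κ d ≤ cnt M ι (iRej M ι κ) d g := by
      by_contra hc
      exact hng (mem_dKeeps.2 ⟨haccg, hpg, Nat.lt_of_not_le hc⟩)
    exact absurd hcnth (not_lt.2 (le_trans this (cnt_mono_rank (le_of_lt hlt))))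

/-- Hospitals retain previously held interviews that are preferred to a current one. -/
lemma N2 (M : Market D H) (ι : H → ℕ) {κ κ' : D → ℕ} (hκ : ∀ d, κ d ≤ κ' d)
    {d d' : D} {h : H} (hd : (h, d) ∈ interviews M ι κ')
    (hd' : (h, d') ∈ interviews M ι κ) (hlt : M.rankHD h d' < M.rankHD h d) :
    (h, d') ∈ interviews M ι κ' := by
  have hRR : iRej M ι κ' ⊆ iRej M ι κ := by
    rw [iRej_eq, iRej_eq]; exact claimA M ι hκ _
  obtain ⟨hp, hk⟩ := mem_interviews.1 hd
  obtain ⟨hp', hk'⟩ := mem_interviews.1 hd'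
  have haccH : M.accH h d' := (hProps_pool hp').1
  have hnR : (h, d') ∉ iRej M ι κ := (hProps_pool hp').2
  have hnR' : (h, d') ∉ iRej M ι κ' := fun hc => hnR (hRR hc)
  have hprop' : d' ∈ hProps M ι (iRej M ι κ') h := hProps_of_le hp haccH hnR' (le_of_lt hlt)
  have haccD : M.accD d' h := (mem_dKeeps.1 hk').1
  have hcnt : cnt M ι (iRej M ι κ) d' h < κ d' := (mem_dKeeps.1 hk').2.2
  refine mem_interviews.2 ⟨hprop', mem_dKeeps.2 ⟨haccD, hprop', ?_⟩⟩
  have hsub : (Pset M ι (iRej M ι κ') d').filter (fun y => M.rankDH d' y < M.rankDH d' h) ⊆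
      (Pset M ι (iRej M ι κ) d').filter (fun y => M.rankDH d' y < M.rankDH d' h) := by
    intro y hy
    rw [Finset.mem_filter] at hy ⊢
    refine ⟨?_, hy.2⟩
    rw [Pset, Finset.mem_filter] at hy ⊢
    have haccy : M.accD d' y := hy.1.2.1
    have hyR : (y, d') ∉ iRej M ι κ := by
      intro hc
      have h5 : κ d' ≤ cnt M ι (iRej M ι κ) d' y := by
        rw [iRej_eq] at hc ⊢
        exact L5 M ι κ _ d' y haccy hc
      exact absurd hcnt (not_lt.2 (le_trans h5 (cnt_mono_rank (le_of_lt hy.2))))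
    exact ⟨hy.1.1, haccy, hProps_mono hRR hy.1.2.2 hyR⟩
  calc cnt M ι (iRej M ι κ') d' h ≤ cnt M ι (iRej M ι κ) d' h := card_le_card hsub
    _ < κ d' := hcnt
    _ ≤ κ' d' := hκ d'

end RBRA
namespace RBRA
set_option linter.unusedSectionVars false
open Finset
variable {D H : Type*} [Fintype D] [Fintype H] [DecidableEq D] [DecidableEq H]
variable {M : Market D H} {V : Finset (H × D)} {S : Finset (D × H)}

lemma mem_dProps' {d : D} {h : H} :
    h ∈ dProps M V S d ↔ ((h, d) ∈ V ∧ (d, h) ∉ S) ∧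
      ∀ g, (g, d) ∈ V → (d, g) ∉ S → ¬ M.rankDH d g < M.rankDH d h := by
  rw [dProps, mem_topN, Nat.lt_one_iff, Finset.card_eq_zero, Finset.filter_eq_empty_iff]
  simp only [Finset.mem_filter, Finset.mem_univ, true_and]
  constructor
  · rintro ⟨h1, h2⟩
    exact ⟨h1, fun g hg hgs => h2 ⟨hg, hgs⟩⟩
  · rintro ⟨h1, h2⟩
    exact ⟨h1, fun {g} hg => h2 g hg.1 hg.2⟩

lemma mem_hKeeps' {d : D} {h : H} :
    d ∈ hKeeps M V S h ↔ h ∈ dProps M V S d ∧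
      ∀ e, h ∈ dProps M V S e → ¬ M.rankHD h e < M.rankHD h d := by
  rw [hKeeps, mem_topN, Nat.lt_one_iff, Finset.card_eq_zero, Finset.filter_eq_empty_iff]
  simp only [Finset.mem_filter, Finset.mem_univ, true_and]

lemma mem_mStep {d : D} {h : H} :
    (d, h) ∈ mStep M V S ↔ (d, h) ∈ S ∨ (h ∈ dProps M V S d ∧ d ∉ hKeeps M V S h) := by
  simp [mStep]

lemma subset_mStep : S ⊆ mStep M V S := fun _ hx => Finset.mem_union_left _ hx

lemma dProps_persist {d : D} {h : H} (hp : h ∈ dProps M V S d)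
    (hn : (d, h) ∉ mStep M V S) : h ∈ dProps M V (mStep M V S) d := by
  rw [mem_dProps'] at hp ⊢
  exact ⟨⟨hp.1.1, hn⟩, fun g hg hgS => hp.2 g hg fun hc => hgS (subset_mStep hc)⟩

lemma exists_keeper {h : H} {e : D} (he : h ∈ dProps M V S e) :
    ∃ e', e' ∈ hKeeps M V S h ∧ h ∈ dProps M V S e' ∧ M.rankHD h e' ≤ M.rankHD h e := by
  obtain ⟨e', he'P, he'min⟩ := Finset.exists_min_image
    (univ.filter fun x => h ∈ dProps M V S x) (M.rankHD h) ⟨e, by simp [he]⟩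
  have he'p : h ∈ dProps M V S e' := (Finset.mem_filter.1 he'P).2
  refine ⟨e', ?_, he'p, he'min e (by simp [he])⟩
  rw [mem_hKeeps']
  exact ⟨he'p, fun d'' hd'' => not_lt.2 (he'min d'' (by simp [hd'']))⟩

lemma keeper_not_rejected {h : H} {e : D} (hk : e ∈ hKeeps M V S h)
    (hp : h ∈ dProps M V S e) : (e, h) ∉ mStep M V S := by
  intro hc
  rcases mem_mStep.1 hc with hS | ⟨_, hnk⟩
  · exact (mem_dProps'.1 hp).1.2 hS
  · exact hnk hk

/-- If a hospital has rejected a doctor, it currently has a strictly better proposer. -/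
lemma Jinv (M : Market D H) (V : Finset (H × D)) :
    ∀ (t : ℕ) (e : D) (h : H), (e, h) ∈ (mStep M V)^[t] (∅ : Finset (D × H)) →
      ∃ e', h ∈ dProps M V ((mStep M V)^[t] (∅ : Finset (D × H))) e' ∧
        M.rankHD h e' < M.rankHD h e := by
  intro t
  induction t with
  | zero => simp
  | succ t ih =>
    intro e h hmem
    rw [Function.iterate_succ_apply'] at hmem ⊢
    set S : Finset (D × H) := (mStep M V)^[t] ∅ with hS
    have helper : ∀ r : ℕ, (∃ e0, h ∈ dProps M V S e0 ∧ M.rankHD h e0 < r) →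
        ∃ e', h ∈ dProps M V (mStep M V S) e' ∧ M.rankHD h e' < r := by
      rintro r ⟨e0, hp0, hr0⟩
      obtain ⟨e', hk, hp', hle⟩ := exists_keeper hp0
      exact ⟨e', dProps_persist hp' (keeper_not_rejected hk hp'), lt_of_le_of_lt hle hr0⟩
    rcases mem_mStep.1 hmem with hSe | ⟨hp, hnk⟩
    · obtain ⟨e', hp', hlt⟩ := ih e h hSe
      exact helper _ ⟨e', hp', hlt⟩
    · refine helper _ ?_
      by_contra hc
      push_neg at hc
      exact hnk (mem_hKeeps'.2 ⟨hp, fun e0 he0 hlt => absurd hlt (not_lt.2 (hc e0 he0))⟩)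

end RBRA

namespace RBRA
set_option linter.unusedSectionVars false
open Finset
variable {D H : Type*} [Fintype D] [Fintype H] [DecidableEq D] [DecidableEq H]

/-- Main round-by-round comparison. -/
lemma claim1 (M : Market D H) (ι : H → ℕ) (κ κ' : D → ℕ) (hκ : ∀ d, κ d ≤ κ' d) :
    ∀ (t : ℕ) (d : D) (h : H),
      (d, h) ∈ (mStep M (interviews M ι κ))^[t] (∅ : Finset (D × H)) →
      ((h, d) ∉ interviews M ι κ' ∨
        (d, h) ∈ (mStep M (interviews M ι κ'))^[t] (∅ : Finset (D × H))) := by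
  intro t
  induction t with
  | zero => simp
  | succ t ih =>
    intro d h hmem
    rw [Function.iterate_succ_apply'] at hmem
    set V : Finset (H × D) := interviews M ι κ with hVdef
    set V' : Finset (H × D) := interviews M ι κ' with hV'def
    set S : Finset (D × H) := (mStep M V)^[t] ∅ with hSdef
    set S' : Finset (D × H) := (mStep M V')^[t] ∅ with hS'def
    have hsub' : S' ⊆ (mStep M V')^[t+1] ∅ := by
      rw [Function.iterate_succ_apply']; exact subset_mStep
    rcases mem_mStep.1 hmem with hold | ⟨hp, hnk⟩
    · rcases ih d h hold with h1 | h2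
      · exact Or.inl h1
      · exact Or.inr (hsub' h2)
    · by_cases hV'd : (h, d) ∈ V'
      · right
        rw [Function.iterate_succ_apply']
        by_cases hdS' : (d, h) ∈ S'
        · exact subset_mStep hdS'
        -- if `e` proposes to `h` under κ at this round, still interviews `h` under κ',
        -- and was not yet rejected under κ', then `e` proposes to `h` under κ' too.
        have propose : ∀ e, h ∈ dProps M V S e → (h, e) ∈ V' → (e, h) ∉ S' →
            h ∈ dProps M V' S' e := by
          intro e hpe hV'e hnS
          rw [mem_dProps']
          refine ⟨⟨hV'e, hnS⟩, ?_⟩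
          intro g hgV' hgS hlt
          by_cases hgV : (g, e) ∈ V
          · have hgSt : (e, g) ∈ S := by
              by_contra hc
              exact (mem_dProps'.1 hpe).2 g hgV hc hlt
            rcases ih e g hgSt with h1 | h2
            · exact h1 hgV'
            · exact hgS h2
          · exact N1 M ι hκ hgV' hgV (mem_dProps'.1 hpe).1.1 hlt
        -- a strictly better proposer to `h` under κ at this round
        obtain ⟨d', hpd', hltd'⟩ : ∃ d', h ∈ dProps M V S d' ∧
            M.rankHD h d' < M.rankHD h d := by
          by_contra hc
          push_neg at hc
          exact hnk (mem_hKeeps'.2 ⟨hp, fun e he hlt => absurd hlt (not_lt.2 (hc e he))⟩)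
        have hd'V : (h, d') ∈ V := (mem_dProps'.1 hpd').1.1
        have hd'V' : (h, d') ∈ V' := N2 M ι hκ hV'd hd'V hltd'
        have hbetter : ∃ e', h ∈ dProps M V' S' e' ∧ M.rankHD h e' < M.rankHD h d := by
          by_cases hd'S' : (d', h) ∈ S'
          · obtain ⟨e', hpe', hlt'⟩ := Jinv M V' t d' h hd'S'
            exact ⟨e', hpe', lt_trans hlt' hltd'⟩
          · exact ⟨d', propose d' hpd' hd'V' hd'S', hltd'⟩
        obtain ⟨e', hpe', hlte'⟩ := hbetter
        have hpd : h ∈ dProps M V' S' d := propose d hp hV'd hdS'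
        have hnk' : d ∉ hKeeps M V' S' h := fun hk => (mem_hKeeps'.1 hk).2 e' hpe' hlte'
        exact mem_mStep.2 (Or.inr ⟨hpd, hnk'⟩)
      · exact Or.inl hV'd

end RBRA

/-- Suppose `(ι,κ)` is adequate at `P` and doctors' capacities
increase to `κ' ≥ κ`. If doctor `d` is rejected by hospital `h` by round `t` of the
doctor-proposing DA of the matching step under `κ`, then under `κ'` either `d` no
longer interviews with `h`, or `d` is rejected by `h` by round `t` as well;
consequently the `(ι,κ')`-matching does not match `d` to any hospital that rejected
her under `κ`. -/
theorem rejected_before_rejected_after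
    (M : Market D H) (hM : M.Strict) (ι : H → ℕ) (κ κ' : D → ℕ)
    (hadq : Adequate M ι κ) (hκ : ∀ d, κ d ≤ κ' d) :
    (∀ (t : ℕ) (d : D) (h : H),
      (d, h) ∈ (mStep M (interviews M ι κ))^[t] (∅ : Finset (D × H)) →
      ((h, d) ∉ interviews M ι κ' ∨
        (d, h) ∈ (mStep M (interviews M ι κ'))^[t] (∅ : Finset (D × H)))) ∧
    (∀ (d : D) (h : H), (d, h) ∈ mRej M (interviews M ι κ) →
      (d, h) ∉ ikMatching M ι κ') := by
  refine ⟨RBRA.claim1 M ι κ κ' hκ, ?_⟩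
  intro d h hrej hmem
  have hp : h ∈ dProps M (interviews M ι κ') (mRej M (interviews M ι κ')) d := by
    have := Finset.mem_filter.1 hmem
    exact this.2.1
  have h2 := RBRA.mem_dProps'.1 hp
  have hrej' : (d, h) ∈ (mStep M (interviews M ι κ))^[Fintype.card D * Fintype.card H]
      (∅ : Finset (D × H)) := hrej
  rcases RBRA.claim1 M ι κ κ' hκ _ d h hrej' with h1 | h1
  · exact h1 h2.1.1
  · exact h2.1.2 h1
end

section
/- Under common preferences with |D| = |H| = n and homogeneous arrangement (l,l) with l ≤ n, every agent is matched in the (l,l)-matching: the match rate is 100% and the number of blocking pairs is zero. -/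
/- Formal model of the two-step interview-then-match process of
Echenique-et-al-style markets: Step 1 computes the interview matching by
hospital-proposing deferred acceptance (with responsive, capacity-constrained
choice functions); Step 2 computes the final one-to-one matching by
doctor-proposing deferred acceptance on preferences restricted to interview
partners. -/

open Finset

variable {D H : Type*} [Fintype D] [Fintype H] [DecidableEq D] [DecidableEq H]

/-! With common rankings, index doctors and hospitals best-first by `Fin n` and cut both sides
into blocks of `l` consecutive agents, so that an index `i` has block coordinates
`(i / l, i % l)`.
In the interview step, after `k` rounds every hospital of block `b` proposes to the doctors of
block `min b k`, and a doctor of block `b ≤ k` keeps exactly the hospitals of her own block: the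
interview matching pairs equal blocks. Inside a block, doctor-proposing deferred acceptance under
common rankings is assortative: after `k` rounds the doctor at position `r` proposes to the
hospital at position `min r k`. Hence the `(l,l)`-matching pairs the `i`-th doctor with the `i`-th
hospital, which matches everyone and admits no blocking pair. -/

theorem exists_equivFin_of_common_rank {ι α : Type*} [Fintype α] {n : ℕ}
    (hn : Fintype.card α = n) (rank : ι → α → ℕ) (hinj : ∀ i, Function.Injective (rank i))
    (hcommon : ∀ i j, rank i = rank j) :
    ∃ e : α ≃ Fin n, ∀ i x y, rank i x < rank i y ↔ e x < e y := by
  cases isEmpty_or_nonempty ι with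
  | inl _ => exact ⟨Fintype.equivFinOfCardEq hn, fun i => isEmptyElim i⟩
  | inr hι =>
    obtain ⟨i₀⟩ := hι
    let : LinearOrder α := LinearOrder.lift' (rank i₀) (hinj i₀)
    let e := (Fintype.orderIsoFinOfCardEq α hn).symm
    exact ⟨e.toEquiv, fun i x y => hcommon i i₀ ▸ e.lt_iff_lt.symm⟩

theorem topN_eq_filter_of_interval {α : Type*} [DecidableEq α] {n : ℕ} (e : α ≃ Fin n)
    {rank : α → ℕ} (hrank : ∀ x y, rank x < rank y ↔ e x < e y) {s : Finset α} {a : ℕ}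
    (hlow : ∀ x ∈ s, a ≤ e x) (hconv : ∀ x ∈ s, ∀ y, a ≤ e y → e y ≤ e x → y ∈ s) (m : ℕ) :
    topN rank m s = s.filter fun x => (e x : ℕ) < a + m := by
  refine filter_congr fun x hx => ?_
  have hax := hlow x hx
  have ha : a < n := hax.trans_lt (e x).isLt
  have hbelow :
      (s.filter fun y => rank y < rank x).map e.toEmbedding = Ico ⟨a, ha⟩ (e x) := by
    ext i
    simp only [mem_map_equiv, mem_filter, hrank, Equiv.apply_symm_apply, mem_Ico, Fin.le_def]
    exact ⟨fun ⟨hy, hlt⟩ => ⟨by simpa using hlow _ hy, hlt⟩,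
      fun ⟨hai, hlt⟩ => ⟨hconv x hx _ (by simpa using hai) (by simpa using hlt.le), hlt⟩⟩
  rw [← card_map, hbelow, Fin.card_Ico]
  dsimp only
  omega

/-- Block coordinates `(i / l, i % l)` compare lexicographically; stated so that `omega` can
treat `i / l`, `i % l` and `l * q` as atoms. -/
theorem Nat.mul_add_le_iff {l q r : ℕ} (i : ℕ) (hl : 0 < l) (hr : r ≤ l) :
    l * q + r ≤ i ↔ q < i / l ∨ q = i / l ∧ r ≤ i % l := by
  have hi := Nat.div_add_mod i l
  have hmod := Nat.mod_lt i hl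
  constructor
  · intro h
    rcases lt_trichotomy q (i / l) with hq | rfl | hq
    · exact Or.inl hq
    · omega
    · have := Nat.mul_le_mul_left l hq
      rw [mul_add_one] at this
      omega
  · rintro (hq | ⟨rfl, hr'⟩)
    · have := Nat.mul_le_mul_left l hq
      rw [mul_add_one] at this
      omega
    · omega

theorem Nat.le_iff_div_mod_lex {l : ℕ} (hl : 0 < l) (i j : ℕ) :
    i ≤ j ↔ i / l < j / l ∨ i / l = j / l ∧ i % l ≤ j % l := by
  have := Nat.mul_add_le_iff j hl (Nat.mod_lt i hl).le (q := i / l)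
  rwa [Nat.div_add_mod] at this

structure Market.IsEnumeratedBy {n : ℕ} (M : Market D H) (eD : D ≃ Fin n) (eH : H ≃ Fin n) :
    Prop where
  rankHD_lt_iff : ∀ h x y, M.rankHD h x < M.rankHD h y ↔ eD x < eD y
  rankDH_lt_iff : ∀ d x y, M.rankDH d x < M.rankDH d y ↔ eH x < eH y
  accD : ∀ d h, M.accD d h
  accH : ∀ h d, M.accH h d

omit [DecidableEq D] [DecidableEq H] in
theorem CommonPrefs.exists_isEnumeratedBy {M : Market D H} (hM : CommonPrefs M)
    (hcard : Fintype.card D = Fintype.card H) :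
    ∃ (eD : D ≃ Fin (Fintype.card D)) (eH : H ≃ Fin (Fintype.card D)),
      M.IsEnumeratedBy eD eH := by
  obtain ⟨⟨hinjDH, hinjHD⟩, hDD, hHH, hacc⟩ := hM
  obtain ⟨eD, hD⟩ := exists_equivFin_of_common_rank rfl M.rankHD hinjHD hHH
  obtain ⟨eH, hH⟩ := exists_equivFin_of_common_rank hcard.symm M.rankDH hinjDH hDD
  exact ⟨eD, eH, hD, hH, fun d h => (hacc d h).1, fun h d => (hacc d h).2⟩

theorem blockingCount_eq_zero_of_stable {M : Market D H} {μ : Finset (D × H)}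
    (hμ : Stable M μ) : blockingCount M μ = 0 := by
  rw [blockingCount, card_eq_zero, filter_eq_empty_iff]
  exact fun p _ => hμ p.1 p.2

omit [DecidableEq D] [DecidableEq H] in
theorem le_card_mul_card_of_equivFin {n : ℕ} (eD : D ≃ Fin n) (eH : H ≃ Fin n) :
    n ≤ Fintype.card D * Fintype.card H := by
  rw [Fintype.card_congr eD, Fintype.card_congr eH, Fintype.card_fin]
  exact Nat.le_mul_self n

section CommonEnumeration

variable {n l : ℕ} {M : Market D H} {eD : D ≃ Fin n} {eH : H ≃ Fin n}

/-- The rejections after `k` rounds of the interview step: each doctor block `b < k` has rejected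
all hospitals of later blocks, so hospital block `b` now proposes to doctor block `min b k`. -/
def iRejAfter (l : ℕ) (eD : D ≃ Fin n) (eH : H ≃ Fin n) (k : ℕ) : Finset (H × D) :=
  univ.filter fun p => (eD p.2 : ℕ) / l < (eH p.1 : ℕ) / l ∧ (eD p.2 : ℕ) / l < k

theorem hProps_iRejAfter (hM : M.IsEnumeratedBy eD eH) (hl : 0 < l) (k : ℕ) (h : H) :
    hProps M (fun _ => l) (iRejAfter l eD eH k) h =
      univ.filter fun d => (eD d : ℕ) / l = min ((eH h : ℕ) / l) k := by
  set c := min ((eH h : ℕ) / l) k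
  have hcoord (i : ℕ) := And.intro (Nat.mul_add_le_iff i hl (Nat.zero_le l) (q := c))
    (And.intro (Nat.mul_add_le_iff i hl le_rfl (q := c)) (Nat.mod_lt i hl))
  have hs : (univ.filter fun d => M.accH h d ∧ (h, d) ∉ iRejAfter l eD eH k) =
      univ.filter fun d => c ≤ (eD d : ℕ) / l := by
    ext d
    simp only [mem_filter, mem_univ, true_and, iRejAfter, hM.accH, not_and, not_lt, c]
    omega
  unfold hProps
  rw [hs, topN_eq_filter_of_interval eD (hM.rankHD_lt_iff h) (a := l * c)]
  · ext d
    simp only [mem_filter, mem_univ, true_and]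
    have := hcoord (eD d)
    omega
  · intro x hx
    simp only [mem_filter, mem_univ, true_and] at hx
    have := hcoord (eD x)
    omega
  · intro _ _ y hy _
    simp only [mem_filter, mem_univ, true_and]
    have := hcoord (eD y)
    omega

theorem dKeeps_iRejAfter (hM : M.IsEnumeratedBy eD eH) (hl : 0 < l) (k : ℕ) (d : D) :
    dKeeps M (fun _ => l) (fun _ => l) (iRejAfter l eD eH k) d =
      univ.filter fun h => (eH h : ℕ) / l = (eD d : ℕ) / l ∧ (eD d : ℕ) / l ≤ k := by
  set b := (eD d : ℕ) / l
  have hcoord (i : ℕ) := And.intro (Nat.mul_add_le_iff i hl (Nat.zero_le l) (q := b))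
    (And.intro (Nat.mul_add_le_iff i hl le_rfl (q := b)) (Nat.mod_lt i hl))
  unfold dKeeps
  simp only [hM.accD, true_and, hProps_iRejAfter hM hl]
  rw [topN_eq_filter_of_interval eH (hM.rankDH_lt_iff d) (a := l * b)]
  · ext h
    simp only [mem_filter, mem_univ, true_and]
    have := hcoord (eH h)
    omega
  · intro x hx
    simp only [mem_filter, mem_univ, true_and] at hx
    have := hcoord (eH x)
    omega
  · intro x hx y hy hyx
    simp only [mem_filter, mem_univ, true_and] at hx ⊢
    have := hcoord (eH y)
    have := Nat.div_le_div_right (c := l) hyx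
    omega

theorem iStep_iRejAfter (hM : M.IsEnumeratedBy eD eH) (hl : 0 < l) (k : ℕ) :
    iStep M (fun _ => l) (fun _ => l) (iRejAfter l eD eH k) = iRejAfter l eD eH (k + 1) := by
  ext ⟨h, d⟩
  simp only [iStep, mem_union, mem_filter, mem_univ, true_and]
  rw [hProps_iRejAfter hM hl, dKeeps_iRejAfter hM hl]
  simp only [iRejAfter, mem_filter, mem_univ, true_and]
  omega

def interviewBlocks (l : ℕ) (eD : D ≃ Fin n) (eH : H ≃ Fin n) : Finset (H × D) :=
  univ.filter fun p => (eH p.1 : ℕ) / l = (eD p.2 : ℕ) / l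

theorem interviews_eq_interviewBlocks (hM : M.IsEnumeratedBy eD eH) (hl : 0 < l) :
    interviews M (fun _ => l) (fun _ => l) = interviewBlocks l eD eH := by
  have hiter (k : ℕ) : (iStep M (fun _ => l) (fun _ => l))^[k] ∅ = iRejAfter l eD eH k := by
    induction k with
    | zero => ext; simp [iRejAfter]
    | succ k ih => rw [Function.iterate_succ_apply', ih, iStep_iRejAfter hM hl]
  have hn := le_card_mul_card_of_equivFin eD eH
  ext ⟨h, d⟩
  simp only [interviews, iRej, hiter, hProps_iRejAfter hM hl, dKeeps_iRejAfter hM hl,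
    interviewBlocks, mem_filter, mem_univ, true_and]
  have := Nat.div_le_self (eD d) l
  have := (eD d).isLt
  omega

/-- The rejections after `k` rounds of the matching step: within each block, the hospital at
position `r` has rejected every doctor at a later position as long as `r < k`, so the doctor at
position `r` now proposes to the hospital at position `min r k`. -/
def mRejAfter (l : ℕ) (eD : D ≃ Fin n) (eH : H ≃ Fin n) (k : ℕ) : Finset (D × H) :=
  univ.filter fun p => (eH p.2 : ℕ) / l = (eD p.1 : ℕ) / l ∧
    (eH p.2 : ℕ) % l < (eD p.1 : ℕ) % l ∧ (eH p.2 : ℕ) % l < k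

theorem dProps_mRejAfter (hM : M.IsEnumeratedBy eD eH) (hl : 0 < l) (k : ℕ) (d : D) :
    dProps M (interviewBlocks l eD eH) (mRejAfter l eD eH k) d =
      univ.filter fun h => (eH h : ℕ) = l * ((eD d : ℕ) / l) + min ((eD d : ℕ) % l) k := by
  set q := (eD d : ℕ) / l
  set r := min ((eD d : ℕ) % l) k
  have hr : r < l := (min_le_left _ _).trans_lt (Nat.mod_lt _ hl)
  have hcoord (i : ℕ) := And.intro (Nat.mul_add_le_iff i hl hr.le (q := q))
    (And.intro (Nat.mul_add_le_iff i hl hr (q := q)) (Nat.mod_lt i hl))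
  unfold dProps
  rw [topN_eq_filter_of_interval eH (hM.rankDH_lt_iff d) (a := l * q + r)]
  · ext h
    simp only [interviewBlocks, mRejAfter, mem_filter, mem_univ, true_and]
    have := hcoord (eH h)
    omega
  · intro x hx
    simp only [interviewBlocks, mRejAfter, mem_filter, mem_univ, true_and] at hx
    have := hcoord (eH x)
    omega
  · intro x hx y hy hyx
    simp only [interviewBlocks, mRejAfter, mem_filter, mem_univ, true_and] at hx ⊢
    have := hcoord (eH y)
    have := Nat.le_iff_div_mod_lex hl _ _ |>.1 hyx
    omega

theorem hKeeps_mRejAfter (hM : M.IsEnumeratedBy eD eH) (hl : 0 < l) (k : ℕ) (h : H) :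
    hKeeps M (interviewBlocks l eD eH) (mRejAfter l eD eH k) h =
      univ.filter fun d => (eD d : ℕ) = eH h ∧ (eH h : ℕ) % l ≤ k := by
  have hdecomp (d : D) := @Nat.div_mod_unique l (eH h) ((eD d : ℕ) / l)
    (min ((eD d : ℕ) % l) k) hl
  have hlex (i j : ℕ) := And.intro (Nat.le_iff_div_mod_lex hl i j) (Nat.le_iff_div_mod_lex hl j i)
  have hmod (d : D) := Nat.mod_lt (eD d) hl
  unfold hKeeps
  simp only [dProps_mRejAfter hM hl, mem_filter, mem_univ, true_and]
  rw [topN_eq_filter_of_interval eD (hM.rankHD_lt_iff h) (a := eH h)]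
  · ext d
    simp only [mem_filter, mem_univ, true_and]
    have := hdecomp d
    have := hmod d
    have := hlex (eD d) (eH h)
    omega
  · intro x hx
    simp only [mem_filter, mem_univ, true_and] at hx
    have := hdecomp x
    have := hmod x
    have := hlex (eH h) (eD x)
    omega
  · intro x hx y hy hyx
    simp only [mem_filter, mem_univ, true_and] at hx ⊢
    have := hdecomp x
    have := hdecomp y
    have := hmod x
    have := hmod y
    have := hlex (eH h) (eD y)
    have := hlex (eD y) (eD x)
    omega

theorem mStep_mRejAfter (hM : M.IsEnumeratedBy eD eH) (hl : 0 < l) (k : ℕ) :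
    mStep M (interviewBlocks l eD eH) (mRejAfter l eD eH k) = mRejAfter l eD eH (k + 1) := by
  ext ⟨d, h⟩
  simp only [mStep, mem_union, mem_filter, mem_univ, true_and]
  rw [dProps_mRejAfter hM hl, hKeeps_mRejAfter hM hl]
  simp only [mRejAfter, mem_filter, mem_univ, true_and]
  have := @Nat.div_mod_unique l (eH h) ((eD d : ℕ) / l) (min ((eD d : ℕ) % l) k) hl
  have := Nat.le_iff_div_mod_lex hl (eD d) (eH h)
  have := Nat.le_iff_div_mod_lex hl (eH h) (eD d)
  have := Nat.mod_lt (eD d) hl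
  omega

theorem finalMatch_interviewBlocks (hM : M.IsEnumeratedBy eD eH) (hl : 0 < l) :
    finalMatch M (interviewBlocks l eD eH) = univ.filter fun p => eH p.2 = eD p.1 := by
  have hiter (k : ℕ) : (mStep M (interviewBlocks l eD eH))^[k] ∅ = mRejAfter l eD eH k := by
    induction k with
    | zero => ext; simp [mRejAfter]
    | succ k ih => rw [Function.iterate_succ_apply', ih, mStep_mRejAfter hM hl]
  have hn := le_card_mul_card_of_equivFin eD eH
  ext ⟨d, h⟩
  simp only [finalMatch, mRej, hiter, dProps_mRejAfter hM hl, hKeeps_mRejAfter hM hl,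
    mem_filter, mem_univ, true_and, Fin.ext_iff]
  have := Nat.div_add_mod (eD d) l
  have := Nat.mod_le (eD d) l
  have := Nat.mod_le (eH h) l
  have := (eD d).isLt
  have := (eH h).isLt
  omega

theorem ikMatching_eq_assortative (hM : M.IsEnumeratedBy eD eH) (hl : 0 < l) :
    ikMatching M (fun _ => l) (fun _ => l) = univ.filter fun p => eH p.2 = eD p.1 := by
  rw [ikMatching, interviews_eq_interviewBlocks hM hl, finalMatch_interviewBlocks hM hl]

omit [DecidableEq D] [DecidableEq H] in
theorem stable_assortative_s19 (hM : M.IsEnumeratedBy eD eH) :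
    Stable M (univ.filter fun p => eH p.2 = eD p.1) := by
  rintro d h ⟨-, -, -, hd, hh⟩
  have hdh := (hM.rankDH_lt_iff d _ _).1 (hd (eH.symm (eD d)) (by simp))
  have hhd := (hM.rankHD_lt_iff h _ _).1 (hh (eD.symm (eH h)) (by simp))
  simp only [Equiv.apply_symm_apply] at hdh hhd
  exact lt_asymm hdh hhd

end CommonEnumeration

theorem balanced_equal_caps_full_match_general
    (M : Market D H) (hM : CommonPrefs M)
    (hcard : Fintype.card D = Fintype.card H)
    (l : ℕ) (hl : 1 ≤ l) :
    (∀ d : D, ∃ h : H, (d, h) ∈ ikMatching M (fun _ => l) (fun _ => l)) ∧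
    (∀ h : H, ∃ d : D, (d, h) ∈ ikMatching M (fun _ => l) (fun _ => l)) ∧
    blockingCount M (ikMatching M (fun _ => l) (fun _ => l)) = 0 := by
  obtain ⟨eD, eH, hE⟩ := hM.exists_isEnumeratedBy hcard
  rw [ikMatching_eq_assortative hE hl]
  exact ⟨fun d => ⟨eH.symm (eD d), by simp⟩, fun h => ⟨eD.symm (eH h), by simp⟩,
    blockingCount_eq_zero_of_stable (stable_assortative_s19 hE)⟩

/-- Under common preferences with `|D| = |H|` and homogeneous
arrangement `(l,l)` with `1 ≤ l ≤ |D|`, every agent is matched in the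
`(l,l)`-matching (100% match rate) and there are no blocking pairs. -/
theorem balanced_equal_caps_full_match
    (M : Market D H) (hM : CommonPrefs M)
    (hcard : Fintype.card D = Fintype.card H)
    (l : ℕ) (hl : 1 ≤ l) (hln : l ≤ Fintype.card D) :
    (∀ d : D, ∃ h : H, (d, h) ∈ ikMatching M (fun _ => l) (fun _ => l)) ∧
    (∀ h : H, ∃ d : D, (d, h) ∈ ikMatching M (fun _ => l) (fun _ => l)) ∧
    blockingCount M (ikMatching M (fun _ => l) (fun _ => l)) = 0 :=
  balanced_equal_caps_full_match_general M hM hcard l hl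
end
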